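/- arXiv:2502.09332 — 6 statements merged into one kernel-verified Lean document; each statement's English description precedes it below -/
import Mathlib

section
/- Let v_1,…,v_n ∈ ℝ^d and w_1,…,w_{n'} ∈ ℝ^d have Euclidean norm at most 1, let K = conv({v_1,…,v_n}), let π(p) = Σ_i p(i) v_i for p ∈ Δ_n and π'(q) = Σ_j q(j) w_j for q ∈ Δ_{n'}, and fix any map ι : K → Δ_n satisfying π(ι(x)) = x for all x ∈ K. Let x_1,…,x_T be finitely supported probability distributions on K and q_1,…,q_T ∈ Δ_{n'}. Define p_t = Σ_{s ∈ supp(x_t)} x_t(s) · ι(s) ∈ Δ_n and the linear losses ℓ_t : K → ℝ by ℓ_t(x) = −⟨x, π'(q_t)⟩. Then the Learner's swap regret in the structured game with payoff u_L(i,j) = ⟨v_i, w_j⟩ satisfies SwapReg(p_{1:T}, q_{1:T}) ≤ FullSwapReg(x_{1:T}, ℓ_{1:T}). -/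
open scoped RealInnerProductSpace

/-- **Reduction from swap regret in structured games to full swap regret.**
With embeddings `v i`, `w j` of norms at most 1, `K = conv{v_1,…,v_n}`,
projection `π(p) = ∑ p i • v i`, a right inverse `ι` of `π` on `K`, finitely
supported distributions `x t` on `K`, and linear losses `ℓ_t(z) = −⟪z, π'(q_t)⟫`,
the Learner's swap regret of the induced mixed strategies
`p_t = E_{s ∼ x_t}[ι(s)]` is at most the full swap regret of `x_{1:T}`. -/
theorem swap_regret_le_full_swap_regret
    {d n n' T : ℕ}
    (v : Fin n → EuclideanSpace ℝ (Fin d)) (w : Fin n' → EuclideanSpace ℝ (Fin d))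
    (hv : ∀ i, ‖v i‖ ≤ 1) (hw : ∀ j, ‖w j‖ ≤ 1)
    (K : Set (EuclideanSpace ℝ (Fin d))) (hK : K = convexHull ℝ (Set.range v))
    (ι : EuclideanSpace ℝ (Fin d) → (Fin n → ℝ))
    (hι : ∀ z ∈ K, ι z ∈ stdSimplex ℝ (Fin n) ∧ ∑ i : Fin n, ι z i • v i = z)
    (x : Fin T → (EuclideanSpace ℝ (Fin d) →₀ ℝ))
    (hx : ∀ t, (∀ s, 0 ≤ x t s) ∧ ((x t).sum fun _ a => a) = 1 ∧
      ∀ s ∈ (x t).support, s ∈ K)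
    (q : Fin T → (Fin n' → ℝ)) (hq : ∀ t, q t ∈ stdSimplex ℝ (Fin n'))
    (p : Fin T → (Fin n → ℝ)) (hp : ∀ t i, p t i = (x t).sum fun s a => a * ι s i)
    (ℓ : Fin T → EuclideanSpace ℝ (Fin d) → ℝ)
    (hℓ : ∀ t z, ℓ t z = -⟪z, ∑ j : Fin n', q t j • w j⟫) :
    sSup {r : ℝ | ∃ φ : Fin n → Fin n,
        r = ∑ t : Fin T, ∑ i : Fin n, p t i *
          ((∑ j : Fin n', q t j * ⟪v (φ i), w j⟫) -
            ∑ j : Fin n', q t j * ⟪v i, w j⟫)} ≤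
    sSup {r : ℝ | ∃ ψ : EuclideanSpace ℝ (Fin d) → EuclideanSpace ℝ (Fin d),
        (∀ z ∈ K, ψ z ∈ K) ∧
        r = ∑ t : Fin T, (x t).sum fun s a => a * (ℓ t s - ℓ t (ψ s))} := by
  classical
  have hKball : ∀ z ∈ K, ‖z‖ ≤ 1 := by
    intro z hz
    rw [hK] at hz
    have hsub : convexHull ℝ (Set.range v) ⊆ Metric.closedBall 0 1 := by
      apply convexHull_min
      · rintro _ ⟨i, rfl⟩
        simpa [Metric.mem_closedBall] using hv i
      · exact convex_closedBall _ _
    simpa [Metric.mem_closedBall] using hsub hz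
  have hu1 : ∀ t, ‖∑ j : Fin n', q t j • w j‖ ≤ 1 := by
    intro t
    calc ‖∑ j : Fin n', q t j • w j‖ ≤ ∑ j : Fin n', ‖q t j • w j‖ := norm_sum_le _ _
      _ ≤ ∑ j : Fin n', q t j := by
          apply Finset.sum_le_sum
          intro j _
          rw [norm_smul, Real.norm_of_nonneg ((hq t).1 j)]
          exact mul_le_of_le_one_right ((hq t).1 j) (hw j)
      _ = 1 := (hq t).2
  have hℓbound : ∀ (t : Fin T) (z : EuclideanSpace ℝ (Fin d)), z ∈ K → |ℓ t z| ≤ 1 := by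
    intro t z hz
    rw [hℓ, abs_neg]
    calc |⟪z, ∑ j : Fin n', q t j • w j⟫| ≤ ‖z‖ * ‖∑ j : Fin n', q t j • w j‖ :=
          abs_real_inner_le_norm _ _
      _ ≤ 1 * 1 := mul_le_mul (hKball z hz) (hu1 t) (norm_nonneg _) zero_le_one
      _ = 1 := by ring
  have hB : BddAbove {r : ℝ | ∃ ψ : EuclideanSpace ℝ (Fin d) → EuclideanSpace ℝ (Fin d),
      (∀ z ∈ K, ψ z ∈ K) ∧
      r = ∑ t : Fin T, (x t).sum fun s a => a * (ℓ t s - ℓ t (ψ s))} := by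
    refine ⟨2 * T, ?_⟩
    rintro r ⟨ψ, hψ, rfl⟩
    calc ∑ t : Fin T, (x t).sum (fun s a => a * (ℓ t s - ℓ t (ψ s)))
        ≤ ∑ _t : Fin T, (2 : ℝ) := by
          apply Finset.sum_le_sum
          intro t _
          rw [Finsupp.sum]
          calc ∑ s ∈ (x t).support, x t s * (ℓ t s - ℓ t (ψ s))
              ≤ ∑ s ∈ (x t).support, x t s * 2 := by
                apply Finset.sum_le_sum
                intro s hs
                have hsK := (hx t).2.2 s hs
                have h1 := hℓbound t s hsK
                have h2 := hℓbound t (ψ s) (hψ s hsK)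
                have : ℓ t s - ℓ t (ψ s) ≤ 2 := by
                  have := abs_le.1 h1
                  have := abs_le.1 h2
                  linarith [(abs_le.1 h1).2, (abs_le.1 h2).1]
                exact mul_le_mul_of_nonneg_left this ((hx t).1 s)
            _ = 2 := by
                rw [← Finset.sum_mul]
                have : ∑ s ∈ (x t).support, x t s = 1 := by
                  have h := (hx t).2.1
                  rwa [Finsupp.sum] at h
                rw [this, one_mul]
      _ = 2 * T := by simp [mul_comm]
  have hAne : {r : ℝ | ∃ φ : Fin n → Fin n,
      r = ∑ t : Fin T, ∑ i : Fin n, p t i *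
        ((∑ j : Fin n', q t j * ⟪v (φ i), w j⟫) -
          ∑ j : Fin n', q t j * ⟪v i, w j⟫)}.Nonempty := ⟨_, id, rfl⟩
  apply csSup_le_csSup hB hAne
  rintro r ⟨φ, rfl⟩
  have hC : ∀ (t : Fin T) (k : Fin n),
      ∑ j : Fin n', q t j * ⟪v k, w j⟫ = ⟪v k, ∑ j : Fin n', q t j • w j⟫ := by
    intro t k
    rw [inner_sum]
    exact Finset.sum_congr rfl fun j _ => (real_inner_smul_right _ _ _).symm
  refine ⟨fun z => ∑ i : Fin n, ι z i • v (φ i), ?_, ?_⟩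
  · intro z hz
    rw [hK]
    exact (convex_convexHull ℝ _).sum_mem (fun i _ => (hι z hz).1.1 i)
      (hι z hz).1.2 (fun i _ => subset_convexHull ℝ _ ⟨φ i, rfl⟩)
  · refine Finset.sum_congr rfl fun t _ => ?_
    rw [Finsupp.sum]
    have hterm : ∀ s ∈ (x t).support,
        x t s * (ℓ t s - ℓ t (∑ i : Fin n, ι s i • v (φ i))) =
        ∑ i : Fin n, (x t s * ι s i) *
          ((∑ j : Fin n', q t j * ⟪v (φ i), w j⟫) -
            ∑ j : Fin n', q t j * ⟪v i, w j⟫) := by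
      intro s hs
      have hsK := (hx t).2.2 s hs
      have hsv := (hι s hsK).2
      have e1 : ℓ t s = -∑ i : Fin n, ι s i * ⟪v i, ∑ j : Fin n', q t j • w j⟫ := by
        rw [hℓ]
        congr 1
        conv_lhs => rw [← hsv]
        rw [sum_inner]
        exact Finset.sum_congr rfl fun i _ => real_inner_smul_left _ _ _
      have e2 : ℓ t (∑ i : Fin n, ι s i • v (φ i)) =
          -∑ i : Fin n, ι s i * ⟪v (φ i), ∑ j : Fin n', q t j • w j⟫ := by
        rw [hℓ]
        congr 1
        rw [sum_inner]
        exact Finset.sum_congr rfl fun i _ => real_inner_smul_left _ _ _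
      rw [e1, e2]
      simp only [hC]
      rw [neg_sub_neg, ← Finset.sum_sub_distrib, Finset.mul_sum]
      exact Finset.sum_congr rfl fun i _ => by ring
    calc ∑ i : Fin n, p t i *
          ((∑ j : Fin n', q t j * ⟪v (φ i), w j⟫) -
            ∑ j : Fin n', q t j * ⟪v i, w j⟫)
        = ∑ i : Fin n, (∑ s ∈ (x t).support, x t s * ι s i) *
          ((∑ j : Fin n', q t j * ⟪v (φ i), w j⟫) -
            ∑ j : Fin n', q t j * ⟪v i, w j⟫) := by
          refine Finset.sum_congr rfl fun i _ => ?_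
          rw [hp t i, Finsupp.sum]
      _ = ∑ i : Fin n, ∑ s ∈ (x t).support, (x t s * ι s i) *
          ((∑ j : Fin n', q t j * ⟪v (φ i), w j⟫) -
            ∑ j : Fin n', q t j * ⟪v i, w j⟫) := by
          refine Finset.sum_congr rfl fun i _ => ?_
          rw [Finset.sum_mul]
      _ = ∑ s ∈ (x t).support, ∑ i : Fin n, (x t s * ι s i) *
          ((∑ j : Fin n', q t j * ⟪v (φ i), w j⟫) -
            ∑ j : Fin n', q t j * ⟪v i, w j⟫) := Finset.sum_comm
      _ = ∑ s ∈ (x t).support, x t s * (ℓ t s - ℓ t (∑ i : Fin n, ι s i • v (φ i))) :=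
          Finset.sum_congr rfl fun s hs => (hterm s hs).symm
end

section
/- Let s_1 < s_2 < … < s_k be real numbers with s_{i+1} − s_i ≤ ε for all i, and let ℓ : [s_1, s_k] → ℝ be α-strongly convex, i.e., the function x ↦ ℓ(x) − (α/2)x² is convex. Define the piecewise-linearization ℓ̇ : [s_1, s_k] → ℝ by ℓ̇(x) = ℓ(s_i) + ((ℓ(s_{i+1}) − ℓ(s_i))/(s_{i+1} − s_i))·(x − s_i) for x ∈ [s_i, s_{i+1}]. Then ℓ̇ is (α,ε)-nearly strongly convex: for all x, y ∈ [s_1, s_k] and every subgradient g of ℓ̇ at x (i.e., every g ∈ ℝ with ℓ̇(z) ≥ ℓ̇(x) + g·(z − x) for all z ∈ [s_1, s_k]), we have ℓ̇(y) − ℓ̇(x) − g·(y − x) ≥ (α/2)·(max(|y − x| − ε, 0))². -/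
/-!
Take a grid cell `[a, b]` containing `x` whose endpoint on the side of `y` differs from `x`, and
let `c` be the slope of the chord of `ℓ` over it. There `ℓdot` is that chord, so a subgradient `g`
at `x` satisfies `(c - g) (y - x) ≥ 0`. Strong convexity puts `ℓ` above
`chord + (α/2) (z - a) (z - b)` outside `(a, b)`, in particular at every grid point; this minorant
is convex, so it also lies below the chord of `ℓ` over the cell of `y`, i.e. below `ℓdot y`.
Finally `|x - a|, |x - b| ≤ ε` gives `(y - a) (y - b) ≥ (|y - x| - ε)²`.
-/

open Set

noncomputable def chord (f : ℝ → ℝ) (a b z : ℝ) : ℝ := f a + slope f a b * (z - a)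

@[simp] lemma chord_left (f : ℝ → ℝ) (a b : ℝ) : chord f a b a = f a := by simp [chord]

lemma chord_right (f : ℝ → ℝ) {a b : ℝ} (hab : a ≠ b) : chord f a b b = f b := by
  rw [chord, slope_def_field, div_mul_cancel₀ _ (sub_ne_zero.2 hab.symm)]
  ring

lemma chord_sub_chord (f : ℝ → ℝ) (a b z w : ℝ) :
    chord f a b z - chord f a b w = slope f a b * (z - w) := by
  unfold chord
  ring

lemma chord_mono {f g : ℝ → ℝ} {a b z : ℝ} (hab : a < b) (hz : z ∈ Icc a b) (ha : f a ≤ g a)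
    (hb : f b ≤ g b) : chord f a b z ≤ chord g a b z := by
  have hweights : ∀ h : ℝ → ℝ, chord h a b z * (b - a) = (b - z) * h a + (z - a) * h b := by
    intro h
    rw [chord, slope_def_field]
    field_simp [(sub_pos.2 hab).ne']
    ring
  obtain ⟨haz, hzb⟩ := hz
  refine le_of_mul_le_mul_right ?_ (sub_pos.2 hab)
  rw [hweights, hweights]
  gcongr

lemma ConvexOn.add_affine {S : Set ℝ} {f : ℝ → ℝ} (hf : ConvexOn ℝ S f) (u v : ℝ) :
    ConvexOn ℝ S (fun z => f z + u * z + v) := by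
  refine ⟨hf.1, fun x hx y hy a b ha hb hab => ?_⟩
  have := hf.2 hx hy ha hb hab
  simp only [smul_eq_mul] at this ⊢
  linear_combination this - v * hab

lemma ConvexOn.chord_le_of_notMem_Ioo {S : Set ℝ} {f : ℝ → ℝ} (hf : ConvexOn ℝ S f) {a b w : ℝ}
    (ha : a ∈ S) (hb : b ∈ S) (hw : w ∈ S) (hab : a < b) (hw' : w ∉ Ioo a b) :
    chord f a b w ≤ f w := by
  rcases eq_or_ne w a with rfl | hwa
  · simp
  have hslope : slope f a w * (w - a) = f w - f a := by
    rw [slope_def_field, div_mul_cancel₀ _ (sub_ne_zero.2 hwa)]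
  rw [chord]
  rcases le_or_gt b w with hbw | hwb
  · have := hf.slope_mono ha ⟨hb, hab.ne'⟩ ⟨hw, hwa⟩ hbw
    nlinarith
  · have hwa' : w < a := lt_of_le_of_ne (not_lt.1 fun h => hw' ⟨h, hwb⟩) hwa
    have := hf.slope_mono ha ⟨hw, hwa⟩ ⟨hb, hab.ne'⟩ hwb.le
    nlinarith [mul_le_mul_of_nonpos_right this (by linarith : w - a ≤ 0)]

lemma ConvexOn.le_chord {S : Set ℝ} {f : ℝ → ℝ} (hf : ConvexOn ℝ S f) {a b z : ℝ}
    (ha : a ∈ S) (hb : b ∈ S) (hz : z ∈ Icc a b) : f z ≤ chord f a b z := by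
  rcases eq_or_ne z a with rfl | hza
  · simp
  have hslope : slope f a z * (z - a) = f z - f a := by
    rw [slope_def_field, div_mul_cancel₀ _ (sub_ne_zero.2 hza)]
  have hza' : a < z := lt_of_le_of_ne hz.1 hza.symm
  have hzS : z ∈ S := hf.1.ordConnected.out ha hb hz
  have := hf.slope_mono ha ⟨hzS, hza⟩ ⟨hb, (hza'.trans_le hz.2).ne'⟩ hz.2
  rw [chord, ← sub_nonneg]
  nlinarith

lemma chord_add_mul_le_of_convexOn_sub_sq {S : Set ℝ} {ℓ : ℝ → ℝ} {α : ℝ}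
    (hsc : ConvexOn ℝ S (fun z => ℓ z - α / 2 * z ^ 2)) {a b w : ℝ}
    (ha : a ∈ S) (hb : b ∈ S) (hw : w ∈ S) (hab : a < b) (hw' : w ∉ Ioo a b) :
    chord ℓ a b w + α / 2 * ((w - a) * (w - b)) ≤ ℓ w := by
  set q : ℝ → ℝ := fun z => ℓ z - α / 2 * ((z - a) * (z - b))
  have hq : ConvexOn ℝ S q :=
    (hsc.add_affine (α / 2 * (a + b)) (-(α / 2 * (a * b)))).congr fun z _ => by ring
  have hchord : chord q a b w = chord ℓ a b w := by
    simp only [chord, slope_def_field, q, sub_self, mul_zero, zero_mul, sub_zero]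
  have := hq.chord_le_of_notMem_Ioo ha hb hw hab hw'
  rw [hchord] at this
  simp only [q] at this
  linarith

lemma chord_add_mul_le_chord_of_convexOn_sub_sq {S : Set ℝ} {ℓ : ℝ → ℝ} {α : ℝ}
    (hsc : ConvexOn ℝ S (fun z => ℓ z - α / 2 * z ^ 2)) (hα : 0 ≤ α) {a b c d y : ℝ}
    (ha : a ∈ S) (hb : b ∈ S) (hc : c ∈ S) (hd : d ∈ S) (hab : a < b) (hcd : c < d)
    (hc' : c ∉ Ioo a b) (hd' : d ∉ Ioo a b) (hy : y ∈ Icc c d) :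
    chord ℓ a b y + α / 2 * ((y - a) * (y - b)) ≤ chord ℓ c d y := by
  set G : ℝ → ℝ := fun z => chord ℓ a b z + α / 2 * ((z - a) * (z - b))
  have hG : ConvexOn ℝ univ G :=
    (((Even.convexOn_pow even_two).smul (by positivity : 0 ≤ α / 2)).add_affine
      (slope ℓ a b - α / 2 * (a + b)) (ℓ a - slope ℓ a b * a + α / 2 * (a * b))).congr
      fun z _ => by simp only [G, chord, smul_eq_mul]; ring
  calc G y ≤ chord G c d y := hG.le_chord (mem_univ c) (mem_univ d) hy
    _ ≤ chord ℓ c d y :=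
      chord_mono hcd hy (chord_add_mul_le_of_convexOn_sub_sq hsc ha hb hc hab hc')
        (chord_add_mul_le_of_convexOn_sub_sq hsc ha hb hd hab hd')

lemma slope_sub_mul_nonneg_of_subgradient {f h : ℝ → ℝ} {a b x y g : ℝ} (hab : a < b)
    (hh : ∀ z ∈ Icc a b, h z = chord f a b z) (hx : x ∈ Icc a b)
    (ha : h x + g * (a - x) ≤ h a) (hb : h x + g * (b - x) ≤ h b)
    (hright : x < y → x < b) (hleft : y < x → a < x) : 0 ≤ (slope f a b - g) * (y - x) := by
  rw [hh x hx] at ha hb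
  rw [hh a ⟨le_rfl, hab.le⟩, chord_left] at ha
  rw [hh b ⟨hab.le, le_rfl⟩, chord_right f hab.ne] at hb
  have ha' : 0 ≤ (slope f a b - g) * (a - x) := by
    linarith [chord_sub_chord f a b a x, chord_left f a b]
  have hb' : 0 ≤ (slope f a b - g) * (b - x) := by
    linarith [chord_sub_chord f a b b x, chord_right f hab.ne]
  rcases lt_trichotomy x y with hxy | rfl | hxy
  · exact mul_nonneg (nonneg_of_mul_nonneg_left hb' (sub_pos.2 (hright hxy)))
      (sub_pos.2 hxy).le
  · simp
  · exact mul_nonneg_of_nonpos_of_nonpos (nonpos_of_mul_nonneg_left ha' (sub_neg.2 (hleft hxy)))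
      (sub_neg.2 hxy).le

lemma sq_abs_sub_sub_le_mul {a b x y ε : ℝ} (hx : x ∈ Icc a b) (hab : b - a ≤ ε)
    (hε : ε ≤ |y - x|) : (|y - x| - ε) ^ 2 ≤ (y - a) * (y - b) := by
  obtain ⟨hax, hxb⟩ := hx
  rcases le_total x y with hxy | hyx
  · rw [abs_of_nonneg (sub_nonneg.2 hxy)] at hε ⊢
    rw [sq]
    exact mul_le_mul (by linarith) (by linarith) (by linarith) (by linarith)
  · rw [abs_of_nonpos (sub_nonpos.2 hyx)] at hε ⊢
    calc (-(y - x) - ε) ^ 2 = (x - y - ε) * (x - y - ε) := by ring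
      _ ≤ (a - y) * (b - y) := mul_le_mul (by linarith) (by linarith) (by linarith) (by linarith)
      _ = (y - a) * (y - b) := by ring

lemma Fin.exists_castSucc_and_not_succ {m : ℕ} {P : Fin (m + 1) → Prop} (h0 : P 0)
    (hlast : ¬P (Fin.last m)) : ∃ i : Fin m, P i.castSucc ∧ ¬P i.succ := by
  induction m with
  | zero => exact absurd h0 hlast
  | succ m ih =>
    by_cases h : P (Fin.last m).castSucc
    · exact ⟨Fin.last m, h, by rwa [Fin.succ_last]⟩
    · obtain ⟨i, hi, hi'⟩ := ih (P := fun j => P j.castSucc) h0 h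
      exact ⟨i.castSucc, hi, by rwa [Fin.succ_castSucc]⟩

lemma StrictMono.notMem_Ioo_castSucc_succ {β : Type*} [Preorder β] {m : ℕ}
    {s : Fin (m + 1) → β} (hs : StrictMono s) (i : Fin m) (k : Fin (m + 1)) :
    s k ∉ Ioo (s i.castSucc) (s i.succ) := fun ⟨h1, h2⟩ =>
  (hs.monotone (Fin.castSucc_lt_iff_succ_le.1 (hs.lt_iff_lt.1 h1))).not_gt h2

lemma exists_grid_cell_toward {m : ℕ} (s : Fin (m + 1) → ℝ) {x y : ℝ}
    (hx : x ∈ Icc (s 0) (s (Fin.last m))) (hy : y ∈ Icc (s 0) (s (Fin.last m))) (hxy : x ≠ y) :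
    ∃ i : Fin m, x ∈ Icc (s i.castSucc) (s i.succ) ∧
      (x < y → x < s i.succ) ∧ (y < x → s i.castSucc < x) := by
  rcases hxy.lt_or_gt with hlt | hgt
  · obtain ⟨i, hi, hi'⟩ := Fin.exists_castSucc_and_not_succ (P := fun j => s j ≤ x) hx.1
      (not_le.2 (hlt.trans_le hy.2))
    have hi' : x < s i.succ := not_le.1 hi'
    exact ⟨i, ⟨hi, hi'.le⟩, fun _ => hi', fun h => absurd h hlt.not_gt⟩
  · obtain ⟨i, hi, hi'⟩ := Fin.exists_castSucc_and_not_succ (P := fun j => s j < x)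
      (hy.1.trans_lt hgt) (not_lt.2 hx.2)
    have hi' : x ≤ s i.succ := not_lt.1 hi'
    exact ⟨i, ⟨hi.le, hi'⟩, fun h => absurd h hgt.not_gt, fun _ => hi⟩

/-- **Piecewise-linearization of a strongly convex function is nearly strongly convex.**
Given a grid `s 0 < s 1 < … < s m` with gaps at most `ε` and an `α`-strongly
convex `ℓ` on `[s 0, s m]`, the piecewise-linear interpolation `ℓdot` of `ℓ`
on the grid is `(α, ε)`-nearly strongly convex: any subgradient inequality
holds with slack `(α/2)·(max(|y−x|−ε,0))²`. -/
theorem piecewise_linearization_nearly_strongly_convex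
    (m : ℕ) (hm : 1 ≤ m) (s : Fin (m + 1) → ℝ) (hmono : StrictMono s)
    (ε α : ℝ)
    (hgap : ∀ i : Fin m, s i.succ - s i.castSucc ≤ ε)
    (ℓ : ℝ → ℝ)
    (hsc : ConvexOn ℝ (Set.Icc (s 0) (s (Fin.last m))) (fun z => ℓ z - α / 2 * z ^ 2))
    (ℓdot : ℝ → ℝ)
    (hdot : ∀ i : Fin m, ∀ z ∈ Set.Icc (s i.castSucc) (s i.succ),
      ℓdot z = ℓ (s i.castSucc) +
        (ℓ (s i.succ) - ℓ (s i.castSucc)) / (s i.succ - s i.castSucc) *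
          (z - s i.castSucc)) :
    ∀ x ∈ Set.Icc (s 0) (s (Fin.last m)), ∀ y ∈ Set.Icc (s 0) (s (Fin.last m)),
      ∀ gsub : ℝ,
        (∀ z ∈ Set.Icc (s 0) (s (Fin.last m)), ℓdot x + gsub * (z - x) ≤ ℓdot z) →
        α / 2 * max (|y - x| - ε) 0 ^ 2 ≤ ℓdot y - ℓdot x - gsub * (y - x) := by
  intro x hx y hy g hg
  have hgrid : ∀ k, s k ∈ Icc (s 0) (s (Fin.last m)) := fun k =>
    ⟨hmono.monotone (Fin.zero_le k), hmono.monotone (Fin.le_last k)⟩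
  have hcell : ∀ i : Fin m, ∀ z ∈ Icc (s i.castSucc) (s i.succ),
      ℓdot z = chord ℓ (s i.castSucc) (s i.succ) z := fun i z hz => by
    rw [hdot i z hz, chord, slope_def_field]
  rcases le_or_gt α 0 with hα | hα
  · nlinarith [hg y hy, sq_nonneg (max (|y - x| - ε) 0)]
  rcases le_or_gt |y - x| ε with hnear | hfar
  · rw [max_eq_right (by linarith)]
    linarith [hg y hy]
  have hxy : x ≠ y := by
    rintro rfl
    have := hmono (Fin.castSucc_lt_succ (i := ⟨0, hm⟩))
    simp only [sub_self, abs_zero] at hfar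
    linarith [hgap ⟨0, hm⟩]
  obtain ⟨i, hxi, hright, hleft⟩ := exists_grid_cell_toward s hx hy hxy
  obtain ⟨j, hyj, -⟩ := exists_grid_cell_toward s hy hx hxy.symm
  have hab : s i.castSucc < s i.succ := hmono (Fin.castSucc_lt_succ (i := i))
  have hsign := slope_sub_mul_nonneg_of_subgradient hab (hcell i) hxi (hg _ (hgrid _))
    (hg _ (hgrid _)) hright hleft
  have hmargin := chord_add_mul_le_chord_of_convexOn_sub_sq hsc hα.le (hgrid _) (hgrid _)
    (hgrid _) (hgrid _) hab (hmono (Fin.castSucc_lt_succ (i := j)))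
    (hmono.notMem_Ioo_castSucc_succ i _) (hmono.notMem_Ioo_castSucc_succ i _) hyj
  have hsq := sq_abs_sub_sub_le_mul hxi (hgap i) hfar.le
  rw [max_eq_left (by linarith), hcell j y hyj, hcell i x hxi]
  calc α / 2 * (|y - x| - ε) ^ 2
      ≤ α / 2 * ((y - s i.castSucc) * (y - s i.succ)) := by gcongr
    _ ≤ _ := by linarith [chord_sub_chord ℓ (s i.castSucc) (s i.succ) y x]
end

section
/- Let K ⊆ ℝ^d be a convex set contained in the closed unit ball, let G ≥ 0, and let f : K → ℝ be a convex function such that at every x ∈ K there exists a subgradient g_x ∈ ℝ^d (i.e., f(y) ≥ f(x) + ⟨g_x, y − x⟩ for all y ∈ K) with ‖g_x‖ ≤ G. Let E = {(x, y) ∈ ℝ^d × ℝ : x ∈ K, y ≥ f(x)} be the epigraph of f. Then for every x ∈ K and every y ∈ ℝ with y ≤ f(x), f(x) − y ≤ √(1 + G²) · dist((x, y), E), where dist denotes Euclidean distance in ℝ^{d+1} from a point to a set. -/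
open scoped RealInnerProductSpace

private lemma cs_aux (G a b : ℝ) (hG : 0 ≤ G) (ha : 0 ≤ a) (hb : 0 ≤ b) :
    G * a + b ≤ Real.sqrt (1 + G ^ 2) * Real.sqrt (a ^ 2 + b ^ 2) := by
  rw [← Real.sqrt_mul (by positivity)]
  have h1 : G * a + b = Real.sqrt ((G * a + b) ^ 2) := by
    rw [Real.sqrt_sq (by positivity)]
  rw [h1]
  apply Real.sqrt_le_sqrt
  nlinarith [sq_nonneg (G * b - a)]

/-- **Distance to the epigraph bounds vertical distance.**
If `f` is convex on `K ⊆ ℝ^d` (contained in the unit ball) with subgradients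
of norm at most `G` at every point, `E` is its epigraph in `ℝ^d × ℝ` (with the
Euclidean, i.e. `L²`, product norm), and `y ≤ f x`, then
`f x − y ≤ √(1+G²) · dist((x,y), E)`. -/
theorem epigraph_distance
    {d : ℕ} (K : Set (EuclideanSpace ℝ (Fin d)))
    (hKcv : Convex ℝ K) (hKball : K ⊆ Metric.closedBall 0 1)
    (G : ℝ) (hG : 0 ≤ G)
    (f : EuclideanSpace ℝ (Fin d) → ℝ) (hf : ConvexOn ℝ K f)
    (hsub : ∀ x ∈ K, ∃ g : EuclideanSpace ℝ (Fin d), ‖g‖ ≤ G ∧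
      ∀ y ∈ K, f x + ⟪g, y - x⟫ ≤ f y) :
    ∀ x ∈ K, ∀ y : ℝ, y ≤ f x →
      f x - y ≤ Real.sqrt (1 + G ^ 2) *
        Metric.infDist
          ((WithLp.equiv 2 (EuclideanSpace ℝ (Fin d) × ℝ)).symm (x, y))
          {p : WithLp 2 (EuclideanSpace ℝ (Fin d) × ℝ) |
            (WithLp.equiv 2 (EuclideanSpace ℝ (Fin d) × ℝ) p).1 ∈ K ∧
            f (WithLp.equiv 2 (EuclideanSpace ℝ (Fin d) × ℝ) p).1 ≤
              (WithLp.equiv 2 (EuclideanSpace ℝ (Fin d) × ℝ) p).2} := by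
  intro x hx y hy
  set E := {p : WithLp 2 (EuclideanSpace ℝ (Fin d) × ℝ) |
            (WithLp.equiv 2 (EuclideanSpace ℝ (Fin d) × ℝ) p).1 ∈ K ∧
            f (WithLp.equiv 2 (EuclideanSpace ℝ (Fin d) × ℝ) p).1 ≤
              (WithLp.equiv 2 (EuclideanSpace ℝ (Fin d) × ℝ) p).2} with hE
  set q := (WithLp.equiv 2 (EuclideanSpace ℝ (Fin d) × ℝ)).symm (x, y) with hq
  obtain ⟨g, hgG, hgsub⟩ := hsub x hx
  have hs : 0 < Real.sqrt (1 + G ^ 2) := Real.sqrt_pos.2 (by positivity)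
  -- pointwise bound
  have key : ∀ p ∈ E, f x - y ≤ Real.sqrt (1 + G ^ 2) * dist q p := by
    intro p hp
    obtain ⟨hp1, hp2⟩ := hp
    set u := (WithLp.equiv 2 (EuclideanSpace ℝ (Fin d) × ℝ) p).1
    set v := (WithLp.equiv 2 (EuclideanSpace ℝ (Fin d) × ℝ) p).2
    have hdist : dist q p = Real.sqrt (dist x u ^ 2 + dist y v ^ 2) := by
      rw [WithLp.prod_dist_eq_of_L2]
      rfl
    have h1 : f x - v ≤ ⟪g, x - u⟫ := by
      have := hgsub u hp1
      have h2 : ⟪g, u - x⟫ = - ⟪g, x - u⟫ := by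
        rw [← inner_neg_right]; congr 1; abel
      linarith
    have h2 : ⟪g, x - u⟫ ≤ G * dist x u := by
      calc ⟪g, x - u⟫ ≤ ‖g‖ * ‖x - u‖ := real_inner_le_norm g (x - u)
        _ ≤ G * dist x u := by
            rw [dist_eq_norm]
            exact mul_le_mul_of_nonneg_right hgG (norm_nonneg _)
    have h3 : f x - y ≤ G * dist x u + dist y v := by
      have : v - y ≤ dist y v := by
        rw [Real.dist_eq, abs_sub_comm]
        exact le_abs_self _
      linarith
    calc f x - y ≤ G * dist x u + dist y v := h3
      _ ≤ Real.sqrt (1 + G ^ 2) * Real.sqrt (dist x u ^ 2 + dist y v ^ 2) :=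
          cs_aux G _ _ hG dist_nonneg dist_nonneg
      _ = Real.sqrt (1 + G ^ 2) * dist q p := by rw [hdist]
  have hne : E.Nonempty := by
    refine ⟨(WithLp.equiv 2 (EuclideanSpace ℝ (Fin d) × ℝ)).symm (x, f x), ?_, ?_⟩ <;> simp [hx]
  have hle : (f x - y) / Real.sqrt (1 + G ^ 2) ≤ Metric.infDist q E := by
    by_contra h
    push_neg at h
    obtain ⟨p, hp, hdp⟩ := (Metric.infDist_lt_iff hne).1 h
    have := key p hp
    rw [lt_div_iff₀ hs] at hdp
    nlinarith
  calc f x - y = Real.sqrt (1 + G ^ 2) * ((f x - y) / Real.sqrt (1 + G ^ 2)) := by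
        field_simp
    _ ≤ Real.sqrt (1 + G ^ 2) * Metric.infDist q E :=
        mul_le_mul_of_nonneg_left hle hs.le
end

section
/- (ℓ2-calibration error equals full swap regret.) Let x_1,…,x_T be finitely supported probability distributions on [0,1] and let b_1,…,b_T ∈ {0,1}. Define the losses ℓ_t : [0,1] → ℝ by ℓ_t(p) = (p − b_t)². Then Cal(x_{1:T}, b_{1:T}) = FullSwapReg(x_{1:T}, ℓ_{1:T}), where the full swap regret is taken over the set K = [0,1]. -/
/-- The `ℓ₂`-calibration error of forecasts `x t` (finitely supported
distributions on `[0,1]`) against outcomes `b t ∈ {0,1}`. -/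
noncomputable def calibrationError (T : ℕ) (x : Fin T → (ℝ →₀ ℝ)) (b : Fin T → ℝ) : ℝ :=
  ∑ p ∈ Finset.univ.biUnion (fun t : Fin T => (x t).support),
    (∑ t : Fin T, x t p) *
      (p - (∑ t : Fin T, b t * x t p) / (∑ t : Fin T, x t p)) ^ 2

/-- **`ℓ₂`-calibration error equals full swap regret.**
For forecasts `x t` (finitely supported distributions on `[0,1]`) and outcomes
`b t ∈ {0,1}`, the `ℓ₂`-calibration error equals the full swap regret of
`x_{1:T}` on `K = [0,1]` for the losses `ℓ_t(p) = (p − b_t)²`. -/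
theorem calibration_eq_full_swap_regret
    (T : ℕ) (x : Fin T → (ℝ →₀ ℝ))
    (hx : ∀ t, (∀ s, 0 ≤ x t s) ∧ ((x t).sum fun _ a => a) = 1 ∧
      ∀ s ∈ (x t).support, s ∈ Set.Icc (0 : ℝ) 1)
    (b : Fin T → ℝ) (hb : ∀ t, b t = 0 ∨ b t = 1)
    (ℓ : Fin T → ℝ → ℝ) (hℓ : ∀ t p, ℓ t p = (p - b t) ^ 2) :
    calibrationError T x b =
      sSup {r : ℝ | ∃ φ : ℝ → ℝ,
        (∀ z ∈ Set.Icc (0 : ℝ) 1, φ z ∈ Set.Icc (0 : ℝ) 1) ∧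
        r = ∑ t : Fin T, (x t).sum fun s a => a * (ℓ t s - ℓ t (φ s))} := by
  classical
  set S : Finset ℝ := Finset.univ.biUnion (fun t : Fin T => (x t).support) with hS
  set m : ℝ → ℝ := fun p => ∑ t : Fin T, x t p with hm
  set B : ℝ → ℝ := fun p => ∑ t : Fin T, b t * x t p with hB
  have hm_pos : ∀ p ∈ S, 0 < m p := by
    intro p hp
    rcases Finset.mem_biUnion.mp hp with ⟨t, -, ht⟩
    have h1 : 0 < x t p :=
      lt_of_le_of_ne ((hx t).1 p) (Ne.symm (Finsupp.mem_support_iff.mp ht))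
    exact lt_of_lt_of_le h1 (Finset.single_le_sum (fun i _ => (hx i).1 p) (Finset.mem_univ t))
  have key : ∀ φ : ℝ → ℝ,
      (∑ t : Fin T, (x t).sum fun s a => a * (ℓ t s - ℓ t (φ s)))
        = ∑ p ∈ S, (m p * (p - B p / m p) ^ 2 - m p * (φ p - B p / m p) ^ 2) := by
    intro φ
    have h1 : ∀ t : Fin T, ((x t).sum fun s a => a * (ℓ t s - ℓ t (φ s)))
        = ∑ s ∈ S, x t s * (ℓ t s - ℓ t (φ s)) := by
      intro t
      rw [Finsupp.sum]
      apply Finset.sum_subset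
      · intro s hs; exact Finset.mem_biUnion.mpr ⟨t, Finset.mem_univ t, hs⟩
      · intro s _ hs
        rw [Finsupp.notMem_support_iff.mp hs]; ring
    simp_rw [h1]
    rw [Finset.sum_comm]
    apply Finset.sum_congr rfl
    intro p hp
    have hmp : m p ≠ 0 := (hm_pos p hp).ne'
    simp_rw [hℓ]
    have expand : ∀ t : Fin T, x t p * ((p - b t) ^ 2 - (φ p - b t) ^ 2)
        = x t p * (p ^ 2 - (φ p) ^ 2) - 2 * (p - φ p) * (b t * x t p) := by
      intro t; ring
    simp_rw [expand]
    rw [Finset.sum_sub_distrib, ← Finset.sum_mul, ← Finset.mul_sum]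
    rw [show (∑ t : Fin T, x t p) = m p from rfl,
        show (∑ t : Fin T, b t * x t p) = B p from rfl]
    field_simp
    ring
  have hCal : calibrationError T x b = ∑ p ∈ S, m p * (p - B p / m p) ^ 2 := rfl
  symm
  apply IsGreatest.csSup_eq
  constructor
  · refine ⟨fun z => if z ∈ S then B z / m z else z, ?_, ?_⟩
    · intro z hz
      by_cases h : z ∈ S
      · simp only [if_pos h]
        constructor
        · apply div_nonneg
          · apply Finset.sum_nonneg; intro t _
            rcases hb t with h0 | h1
            · simp [h0]
            · simpa [h1] using (hx t).1 z
          · exact (hm_pos z h).le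
        · rw [div_le_one (hm_pos z h)]
          apply Finset.sum_le_sum; intro t _
          rcases hb t with h0 | h1
          · simpa [h0] using (hx t).1 z
          · simp [h1]
      · simpa [if_neg h] using hz
    · rw [key, hCal]
      apply Finset.sum_congr rfl
      intro p hp
      simp [if_pos hp]
  · rintro r ⟨φ, hφ, rfl⟩
    rw [key, hCal]
    apply Finset.sum_le_sum
    intro p hp
    have h0 : 0 ≤ m p * (φ p - B p / m p) ^ 2 :=
      mul_nonneg (hm_pos p hp).le (sq_nonneg _)
    linarith
end

section
/- (ℓ2-calibration.) There is an absolute constant C such that for every horizon T ≥ 1 there exists a forecasting strategy — a family of maps taking the outcomes b_1,…,b_{t−1} ∈ {0,1}^{t−1} to a finitely supported probability distribution x_t on [0,1] — such that for every sequence b_1,…,b_T ∈ {0,1}, the ℓ2-calibration error satisfies Cal(x_{1:T}, b_{1:T}) ≤ C · T^{1/3} · log(T+1). -/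
/-!
Forecast only on the grid `{i / m : i ≤ m}`. If `Wᵢ` is the mass put on `i / m` and
`Dᵢ = ∑ₜ xₜ(i / m) (bₜ - i / m)` its bias, the calibration error is `∑ᵢ Dᵢ² / Wᵢ`, which exceeds
the potential `∑ᵢ Dᵢ² / (Wᵢ + 1)` by at most `m + 1`. In every round the forecaster mixes two
adjacent grid points between which the regularized bias `Dᵢ / (Wᵢ + 1)` changes sign, with
weights making the average bias vanish (or plays an endpoint if the sign does not change). Then
the first-order increase of the potential is at most `1 / (2 m²)` whatever the outcome, and the
second-order terms telescope into `3 ∑ᵢ log (Wᵢ + 1)`. So the calibration error is at most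
`(m + 1) + T / (2 m²) + 3 (m + 1) log (T + 1)`, and `m = ⌈T^{1/3}⌉` gives the bound.
-/

open Finset Real

namespace OnlineCalibration

lemma div_add_le_log_add_sub_log {w l : ℝ} (hw : 0 < w) (hl : 0 ≤ l) :
    l / (w + l) ≤ log (w + l) - log w := by
  have hwl : 0 < w + l := by linarith
  have h := one_sub_inv_le_log_of_pos (div_pos hwl hw)
  rwa [log_div hwl.ne' hw.ne', inv_div, one_sub_div hwl.ne', add_sub_cancel_left] at h

lemma sq_div_add_sub_sq_div_le {w l D e : ℝ} (hw : 0 < w) (hl : 0 ≤ l) (hlw : l ≤ w)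
    (hD : |D| ≤ w) (he : |e| ≤ 1) :
    (D + l * e) ^ 2 / (w + l) - D ^ 2 / w ≤
      l * (2 * (D / w) * e - (D / w) ^ 2 / 2) + 3 * (l ^ 2 / (w + l)) := by
  obtain ⟨u, rfl⟩ : ∃ u, D = u * w := ⟨D / w, (div_mul_cancel₀ D hw.ne').symm⟩
  have hu : |u| ≤ 1 := by rwa [abs_mul, abs_of_pos hw, mul_le_iff_le_one_left hw] at hD
  have hue : -1 ≤ u * e := (abs_le.1 (abs_mul u e ▸ mul_le_one₀ hu (abs_nonneg e) he)).1
  have he2 : e ^ 2 ≤ 1 := by nlinarith [abs_le.1 he]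
  -- after clearing denominators, RHS - LHS = l w (l (2 + 2 u e) + l (1 - e²) + u² (w - l) / 2)
  have key : 0 ≤ l * (2 + 2 * u * e) + l * (1 - e ^ 2) + u ^ 2 * (w - l) / 2 := by
    have := mul_nonneg hl (by linarith : (0 : ℝ) ≤ 2 + 2 * u * e)
    have := mul_nonneg hl (by linarith : (0 : ℝ) ≤ 1 - e ^ 2)
    have := mul_nonneg (sq_nonneg u) (by linarith : (0 : ℝ) ≤ w - l)
    linarith
  rw [mul_div_cancel_right₀ u hw.ne', div_sub_div _ _ (by linarith) hw.ne',
    div_le_iff₀ (by positivity)]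
  field_simp
  nlinarith [mul_nonneg (mul_nonneg hl hw.le) key]

lemma sq_div_add_sub_sq_div_le_log {w l D e : ℝ} (hw : 1 ≤ w) (hl0 : 0 ≤ l) (hl1 : l ≤ 1)
    (hD : |D| ≤ w) (he : |e| ≤ 1) :
    (D + l * e) ^ 2 / (w + l) - D ^ 2 / w ≤
      l * (2 * (D / w) * e - (D / w) ^ 2 / 2) + 3 * (log (w + l) - log w) := by
  have hw0 : 0 < w := by linarith
  have hsq : l ^ 2 / (w + l) ≤ l / (w + l) := by gcongr; nlinarith
  linarith [sq_div_add_sub_sq_div_le hw0 hl0 (by linarith) hD he,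
    div_add_le_log_add_sub_log hw0 hl0]

lemma sq_div_le_sq_div_add_one_add_one {W D : ℝ} (hD : |D| ≤ W) :
    D ^ 2 / W ≤ D ^ 2 / (W + 1) + 1 := by
  rcases (abs_nonneg D).trans hD |>.eq_or_lt with rfl | hW
  · simp [abs_nonpos_iff.1 hD]
  · have hD2 : D ^ 2 ≤ W ^ 2 := sq_le_sq.2 (by rwa [abs_of_pos hW])
    rw [div_add_one (by linarith), div_le_div_iff₀ hW (by linarith)]
    nlinarith

lemma natCast_div_mem_Icc {m i : ℕ} (hi : i ≤ m) : (i : ℝ) / m ∈ Set.Icc 0 1 :=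
  ⟨by positivity, div_le_one_of_le₀ (Nat.cast_le.2 hi) (Nat.cast_nonneg m)⟩

lemma abs_sub_natCast_div_le_one {b : ℝ} (hb : b ∈ Set.Icc 0 1) {m i : ℕ} (hi : i ≤ m) :
    |b - i / m| ≤ 1 :=
  abs_sub_le_of_nonneg_of_le hb.1 hb.2 (natCast_div_mem_Icc hi).1 (natCast_div_mem_Icc hi).2

/-- The weights `-y / (x - y)` and `x / (x - y)` make the average of `x` and `y` vanish, so `b`
drops out. -/
lemma mix_sum_le {x y p δ b : ℝ} (hx : 0 < x) (hy : y ≤ 0) :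
    -y / (x - y) * (2 * x * (b - p) - x ^ 2 / 2) +
      (1 - -y / (x - y)) * (2 * y * (b - (p + δ)) - y ^ 2 / 2) ≤ δ ^ 2 / 2 := by
  have hs : 0 < x - y := by linarith
  have hq : 0 ≤ -(x * y) := by nlinarith
  have key : 0 ≤ (x - y) * ((x - y) * δ ^ 2 / 2 + 2 * (x * y) * δ - x * y * (x - y) / 2) := by
    nlinarith [mul_nonneg (sq_nonneg (x + y)) (sq_nonneg δ),
      mul_nonneg hq (sq_nonneg (δ - (x - y) / 2))]
  have key' := (mul_nonneg_iff_of_pos_left hs).1 key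
  have hid : δ ^ 2 / 2 - (-y / (x - y) * (2 * x * (b - p) - x ^ 2 / 2) +
      (1 - -y / (x - y)) * (2 * y * (b - (p + δ)) - y ^ 2 / 2)) =
      ((x - y) * δ ^ 2 / 2 + 2 * (x * y) * δ - x * y * (x - y) / 2) / (x - y) := by
    field_simp
    ring
  linarith [div_nonneg key' hs.le]

structure IsGridDistribution (m : ℕ) (c : ℕ → ℝ) : Prop where
  nonneg : ∀ i, 0 ≤ c i
  sum_eq_one : ∑ i ∈ range (m + 1), c i = 1

lemma IsGridDistribution.le_one {m : ℕ} {c : ℕ → ℝ} (hc : IsGridDistribution m c) {i : ℕ}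
    (hi : i ≤ m) : c i ≤ 1 :=
  hc.sum_eq_one ▸ single_le_sum (fun j _ => hc.nonneg j) (mem_range.2 (Nat.lt_succ_of_le hi))

/-- The summand is the first-order part of the bound `sq_div_add_sub_sq_div_le` on the increase
of `D² / W` when mass `c i` is added at the grid point `i / m`, `u i = D / W` and the outcome is
`b`. -/
structure IsGoodMove (m : ℕ) (u c : ℕ → ℝ) : Prop where
  isGridDistribution : IsGridDistribution m c
  sum_le : ∀ b ∈ Set.Icc (0 : ℝ) 1,
    ∑ i ∈ range (m + 1), c i * (2 * u i * (b - i / m) - u i ^ 2 / 2) ≤ 1 / (2 * (m : ℝ) ^ 2)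

lemma sum_range_pi_single_mul {m i : ℕ} (hi : i ≤ m) (a : ℝ) (f : ℕ → ℝ) :
    ∑ j ∈ range (m + 1), (Pi.single i a : ℕ → ℝ) j * f j = a * f i := by
  simp_rw [← Pi.single_mul_left_apply, sum_pi_single', mem_range, if_pos (Nat.lt_succ_of_le hi)]

lemma isGoodMove_single {m i : ℕ} (hi : i ≤ m) {u : ℕ → ℝ}
    (h : ∀ b ∈ Set.Icc (0 : ℝ) 1, 2 * u i * (b - (i : ℝ) / m) - u i ^ 2 / 2 ≤ 0) :
    IsGoodMove m u (Pi.single i 1) where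
  isGridDistribution :=
    ⟨fun j => by by_cases hj : j = i <;> simp [hj], by simpa using sum_range_pi_single_mul hi 1 1⟩
  sum_le b hb := by
    rw [sum_range_pi_single_mul hi, one_mul]
    exact (h b hb).trans (by positivity)

lemma isGoodMove_mix {m k : ℕ} (hk : k < m) {u : ℕ → ℝ} (hpos : 0 < u k)
    (hnonpos : u (k + 1) ≤ 0) :
    IsGoodMove m u (Pi.single k (-u (k + 1) / (u k - u (k + 1))) +
      Pi.single (k + 1) (1 - -u (k + 1) / (u k - u (k + 1)))) := by
  set l := -u (k + 1) / (u k - u (k + 1))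
  have hl0 : 0 ≤ l := div_nonneg (by linarith) (by linarith)
  have hl1 : l ≤ 1 := div_le_one_of_le₀ (by linarith) (by linarith)
  have hsum (f : ℕ → ℝ) :
      ∑ j ∈ range (m + 1), (Pi.single k l + Pi.single (k + 1) (1 - l) : ℕ → ℝ) j * f j =
        l * f k + (1 - l) * f (k + 1) := by
    simp only [Pi.add_apply, add_mul, sum_add_distrib, sum_range_pi_single_mul hk.le,
      sum_range_pi_single_mul hk]
  refine ⟨⟨fun j => ?_, by simpa using hsum 1⟩, fun b _ => ?_⟩
  · have h₁ : (0 : ℕ → ℝ) ≤ Pi.single k l := Pi.single_nonneg.2 hl0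
    have h₂ : (0 : ℕ → ℝ) ≤ Pi.single (k + 1) (1 - l) := Pi.single_nonneg.2 (sub_nonneg.2 hl1)
    exact add_nonneg (h₁ j) (h₂ j)
  · rw [hsum]
    have hδ : ((k + 1 : ℕ) : ℝ) / m = k / m + 1 / m := by push_cast; ring
    rw [hδ, show (1 : ℝ) / (2 * m ^ 2) = (1 / m) ^ 2 / 2 by ring]
    exact mix_sum_le hpos hnonpos

lemma exists_isGoodMove {m : ℕ} (hm : 0 < m) (u : ℕ → ℝ) : ∃ c, IsGoodMove m u c := by
  by_cases hlast : 0 ≤ u m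
  · refine ⟨_, isGoodMove_single le_rfl fun b hb => ?_⟩
    rw [div_self (by positivity)]
    nlinarith [hb.2]
  by_cases hfirst : u 0 ≤ 0
  · refine ⟨_, isGoodMove_single (Nat.zero_le m) fun b hb => ?_⟩
    rw [Nat.cast_zero, zero_div, sub_zero]
    nlinarith [hb.1]
  rw [not_le] at hlast hfirst
  -- the first sign change of `u` along the grid
  have hlast' : u (m - 1 + 1) ≤ 0 := by rw [Nat.sub_add_cancel hm]; exact hlast.le
  have hex : ∃ k, u (k + 1) ≤ 0 := ⟨m - 1, hlast'⟩
  refine ⟨_, isGoodMove_mix (k := Nat.find hex) ?_ ?_ (Nat.find_spec hex)⟩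
  · exact (Nat.find_min' hex hlast').trans_lt (Nat.sub_lt hm one_pos)
  · cases hk : Nat.find hex with
    | zero => exact hfirst
    | succ k => exact lt_of_not_ge (Nat.find_min hex (by omega))

noncomputable def gridForecast (m : ℕ) (c : ℕ → ℝ) : ℝ →₀ ℝ :=
  ∑ i ∈ range (m + 1), Finsupp.single ((i : ℝ) / m) (c i)

lemma gridForecast_apply (m : ℕ) (c : ℕ → ℝ) (p : ℝ) :
    gridForecast m c p = ∑ i ∈ range (m + 1), if (i : ℝ) / m = p then c i else 0 := by
  simp only [gridForecast, Finsupp.finsetSum_apply, Finsupp.single_apply]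

lemma natCast_div_injective {m : ℕ} (hm : 0 < m) : Function.Injective fun i : ℕ => (i : ℝ) / m :=
  fun i j h => by exact_mod_cast (div_left_inj' (by positivity : (m : ℝ) ≠ 0)).1 h

lemma gridForecast_apply_div {m : ℕ} (hm : 0 < m) (c : ℕ → ℝ) {j : ℕ} (hj : j ∈ range (m + 1)) :
    gridForecast m c (j / m) = c j := by
  rw [gridForecast_apply, sum_eq_single_of_mem j hj (fun i _ hij => if_neg ?_), if_pos rfl]
  exact fun h => hij (natCast_div_injective hm h)

lemma support_gridForecast_subset (m : ℕ) (c : ℕ → ℝ) :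
    (gridForecast m c).support ⊆ (range (m + 1)).image fun i : ℕ => (i : ℝ) / m := by
  classical
  refine Finsupp.support_finsetSum.trans fun p hp => ?_
  obtain ⟨i, hi, hp⟩ := mem_biUnion.1 hp
  exact mem_image.2 ⟨i, hi, (mem_singleton.1 (Finsupp.support_single_subset hp)).symm⟩

lemma sum_gridForecast (m : ℕ) (c : ℕ → ℝ) :
    ((gridForecast m c).sum fun _ a => a) = ∑ i ∈ range (m + 1), c i := by
  rw [gridForecast, ← Finsupp.sum_finsetSum_index (fun _ => rfl) (fun _ _ _ => rfl)]
  exact sum_congr rfl fun i _ => Finsupp.sum_single_index rfl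

lemma IsGridDistribution.gridForecast {m : ℕ} {c : ℕ → ℝ} (hc : IsGridDistribution m c) :
    (∀ p, 0 ≤ gridForecast m c p) ∧ ((gridForecast m c).sum fun _ a => a) = 1 ∧
      ∀ p ∈ (gridForecast m c).support, p ∈ Set.Icc (0 : ℝ) 1 := by
  refine ⟨fun p => ?_, (sum_gridForecast m c).trans hc.sum_eq_one, fun p hp => ?_⟩
  · rw [gridForecast_apply]
    exact sum_nonneg fun i _ => by split_ifs <;> simp [hc.nonneg i]
  · obtain ⟨i, hi, rfl⟩ := mem_image.1 (support_gridForecast_subset m c hp)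
    exact natCast_div_mem_Icc (Nat.le_of_lt_succ (mem_range.1 hi))

lemma mul_sub_div_sq_eq (S B p : ℝ) : S * (p - B / S) ^ 2 = (B - S * p) ^ 2 / S := by
  rcases eq_or_ne S 0 with rfl | hS
  · simp
  · field_simp
    ring

lemma calibrationError_gridForecast {m T : ℕ} (hm : 0 < m) (c : Fin T → ℕ → ℝ) (b : Fin T → ℝ) :
    calibrationError T (fun t => gridForecast m (c t)) b =
      ∑ j ∈ range (m + 1), (∑ t, c t j * (b t - j / m)) ^ 2 / ∑ t, c t j := by
  classical
  rw [calibrationError,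
    sum_subset (biUnion_subset.2 fun t _ => support_gridForecast_subset m (c t)),
    sum_image (natCast_div_injective hm).injOn]
  · refine sum_congr rfl fun j hj => ?_
    simp only [gridForecast_apply_div hm _ hj]
    rw [mul_sub_div_sq_eq, sum_mul]
    simp only [mul_sub, sum_sub_distrib, mul_comm (b _)]
  · intro p _ hp
    have : ∀ t, gridForecast m (c t) p = 0 := fun t =>
      Finsupp.notMem_support_iff.1 fun h => hp (mem_biUnion.2 ⟨t, mem_univ t, h⟩)
    simp [this]

noncomputable def regularizedBias (s : (ℕ → ℝ) × (ℕ → ℝ)) (i : ℕ) : ℝ := s.2 i / (s.1 i + 1)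

section Trajectory

variable (m : ℕ) (sel : (ℕ → ℝ) → ℕ → ℝ)

/-- `(W, D)` after the outcomes `h`: `W i` is the mass put on the grid point `i / m` so far and
`D i = ∑ₛ cₛ i (hₛ - i / m)` its bias. -/
noncomputable def gridState : (t : ℕ) → (Fin t → ℝ) → (ℕ → ℝ) × (ℕ → ℝ)
  | 0, _ => (0, 0)
  | t + 1, h =>
    let s := gridState t (h ∘ Fin.castSucc)
    let c := sel (regularizedBias s)
    (s.1 + c, fun i => s.2 i + c i * (h (Fin.last t) - i / m))

noncomputable def gridForecaster (t : ℕ) (h : Fin t → ℝ) : ℝ →₀ ℝ :=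
  gridForecast m (sel (regularizedBias (gridState m sel t h)))

variable (b : ℕ → ℝ)

noncomputable def weight (t : ℕ) : ℕ → ℝ := (gridState m sel t fun s => b s).1

noncomputable def bias (t : ℕ) : ℕ → ℝ := (gridState m sel t fun s => b s).2

noncomputable def play (t : ℕ) : ℕ → ℝ := sel (regularizedBias (weight m sel b t, bias m sel b t))

noncomputable def potential (t : ℕ) : ℝ :=
  ∑ i ∈ range (m + 1), bias m sel b t i ^ 2 / (weight m sel b t i + 1)

noncomputable def logPotential (t : ℕ) : ℝ :=
  ∑ i ∈ range (m + 1), log (weight m sel b t i + 1)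

lemma weight_succ (t : ℕ) : weight m sel b (t + 1) = weight m sel b t + play m sel b t := rfl

lemma bias_succ (t i : ℕ) :
    bias m sel b (t + 1) i = bias m sel b t i + play m sel b t i * (b t - i / m) := rfl

lemma weight_eq_sum (T i : ℕ) : weight m sel b T i = ∑ t : Fin T, play m sel b t i := by
  induction T with
  | zero => rfl
  | succ T ih => rw [Fin.sum_univ_castSucc, weight_succ, Pi.add_apply, ih]; rfl

lemma bias_eq_sum (T i : ℕ) :
    bias m sel b T i = ∑ t : Fin T, play m sel b t i * (b t - i / m) := by
  induction T with
  | zero => rfl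
  | succ T ih => rw [Fin.sum_univ_castSucc, bias_succ, ih]; rfl

variable {m sel b}

lemma isGoodMove_play (hsel : ∀ u, IsGoodMove m u (sel u)) (t : ℕ) :
    IsGoodMove m (regularizedBias (weight m sel b t, bias m sel b t)) (play m sel b t) :=
  hsel _

lemma isGridDistribution_play (hsel : ∀ u, IsGridDistribution m (sel u)) (t : ℕ) :
    IsGridDistribution m (play m sel b t) :=
  hsel _

lemma weight_nonneg (hsel : ∀ u, IsGridDistribution m (sel u)) (t i : ℕ) :
    0 ≤ weight m sel b t i := by
  rw [weight_eq_sum]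
  exact sum_nonneg fun s _ => (isGridDistribution_play (b := b) hsel s).nonneg i

lemma weight_le (hsel : ∀ u, IsGridDistribution m (sel u)) (t : ℕ) {i : ℕ} (hi : i ≤ m) :
    weight m sel b t i ≤ t := by
  rw [weight_eq_sum]
  simpa using sum_le_sum fun s (_ : s ∈ (univ : Finset (Fin t))) =>
    (isGridDistribution_play (b := b) hsel s).le_one hi

lemma abs_bias_le (hsel : ∀ u, IsGridDistribution m (sel u)) (hb : ∀ t, b t ∈ Set.Icc 0 1)
    (t : ℕ) {i : ℕ} (hi : i ≤ m) : |bias m sel b t i| ≤ weight m sel b t i := by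
  rw [bias_eq_sum, weight_eq_sum]
  refine (abs_sum_le_sum_abs _ _).trans (sum_le_sum fun s _ => ?_)
  have hc := (isGridDistribution_play (b := b) hsel s).nonneg i
  rw [abs_mul, abs_of_nonneg hc]
  exact mul_le_of_le_one_right hc (abs_sub_natCast_div_le_one (hb s) hi)

lemma potential_succ_le (hsel : ∀ u, IsGoodMove m u (sel u)) (hb : ∀ t, b t ∈ Set.Icc 0 1)
    (t : ℕ) : potential m sel b (t + 1) ≤
      potential m sel b t + 1 / (2 * (m : ℝ) ^ 2) +
        3 * (logPotential m sel b (t + 1) - logPotential m sel b t) := by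
  have hgrid u := (hsel u).isGridDistribution
  have hc := (isGoodMove_play (b := b) hsel t).isGridDistribution
  have hstep : ∀ i ∈ range (m + 1),
      bias m sel b (t + 1) i ^ 2 / (weight m sel b (t + 1) i + 1) -
        bias m sel b t i ^ 2 / (weight m sel b t i + 1) ≤
      play m sel b t i *
          (2 * regularizedBias (weight m sel b t, bias m sel b t) i * (b t - i / m) -
            regularizedBias (weight m sel b t, bias m sel b t) i ^ 2 / 2) +
      3 * (log (weight m sel b (t + 1) i + 1) - log (weight m sel b t i + 1)) := by
    intro i hi
    have hi : i ≤ m := Nat.le_of_lt_succ (mem_range.1 hi)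
    have hW := weight_nonneg (b := b) hgrid t i
    rw [bias_succ, weight_succ, Pi.add_apply, add_right_comm]
    exact sq_div_add_sub_sq_div_le_log (by linarith) (hc.nonneg i) (hc.le_one hi)
      ((abs_bias_le hgrid hb t hi).trans (by linarith)) (abs_sub_natCast_div_le_one (hb t) hi)
  have hsum := sum_le_sum hstep
  rw [sum_add_distrib, ← mul_sum, sum_sub_distrib, sum_sub_distrib] at hsum
  have := (isGoodMove_play (b := b) hsel t).sum_le (b t) (hb t)
  unfold potential logPotential
  linarith

lemma potential_le (hsel : ∀ u, IsGoodMove m u (sel u)) (hb : ∀ t, b t ∈ Set.Icc 0 1) (T : ℕ) :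
    potential m sel b T ≤ T / (2 * (m : ℝ) ^ 2) + 3 * logPotential m sel b T := by
  induction T with
  | zero => simp [potential, logPotential, weight, bias, gridState]
  | succ T ih =>
    have := potential_succ_le hsel hb T
    rw [Nat.cast_succ, add_div]
    linarith

lemma logPotential_le (hsel : ∀ u, IsGridDistribution m (sel u)) (T : ℕ) :
    logPotential m sel b T ≤ (m + 1) * log (T + 1) := by
  calc logPotential m sel b T ≤ ∑ _i ∈ range (m + 1), log (T + 1) :=
        sum_le_sum fun i hi => log_le_log (by linarith [weight_nonneg (b := b) hsel T i])
          (by linarith [weight_le (b := b) hsel T (Nat.le_of_lt_succ (mem_range.1 hi))])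
    _ = (m + 1) * log (T + 1) := by simp

lemma calibrationError_gridForecaster_le (hm : 0 < m) (hsel : ∀ u, IsGoodMove m u (sel u))
    (hb : ∀ t, b t ∈ Set.Icc 0 1) (T : ℕ) :
    calibrationError T (fun t => gridForecaster m sel t fun s => b s) (fun t => b t) ≤
      (m + 1) + T / (2 * (m : ℝ) ^ 2) + 3 * ((m + 1) * log (T + 1)) := by
  have hgrid u := (hsel u).isGridDistribution
  have hcal : calibrationError T (fun t => gridForecaster m sel t fun s => b s) (fun t => b t) =
      ∑ i ∈ range (m + 1), bias m sel b T i ^ 2 / weight m sel b T i := by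
    simp only [bias_eq_sum, weight_eq_sum]
    exact calibrationError_gridForecast hm (fun t => play m sel b t) (fun t => b t)
  have hreg : ∑ i ∈ range (m + 1), bias m sel b T i ^ 2 / weight m sel b T i ≤
      potential m sel b T + (m + 1) := by
    calc _ ≤ ∑ i ∈ range (m + 1), (bias m sel b T i ^ 2 / (weight m sel b T i + 1) + 1) :=
          sum_le_sum fun i hi => sq_div_le_sq_div_add_one_add_one
            (abs_bias_le hgrid hb T (Nat.le_of_lt_succ (mem_range.1 hi)))
      _ = potential m sel b T + (m + 1) := by simp [sum_add_distrib, potential]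
  linarith [potential_le hsel hb T, logPotential_le (b := b) hgrid T]

end Trajectory

lemma cube_root_bound {A L T : ℝ} {m : ℕ} (hA : 1 ≤ A) (hAm : A ≤ m) (hmA : m ≤ A + 1)
    (hT : T ≤ A ^ 3) (hL : 1 / 2 ≤ L) :
    (m + 1) + T / (2 * (m : ℝ) ^ 2) + 3 * ((m + 1) * L) ≤ 16 * A * L := by
  have hA0 : 0 < A := by linarith
  have hTm : T / (2 * (m : ℝ) ^ 2) ≤ A / 2 := by
    rw [div_le_iff₀ (by nlinarith)]
    nlinarith [mul_le_mul hAm hAm hA0.le (by linarith)]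
  nlinarith

end OnlineCalibration

/-- **Online `ℓ₂`-calibration with `Õ(T^{1/3})` error.**
There is an absolute constant `C` so that for every horizon `T ≥ 1` there is a
forecasting strategy `A` (mapping past outcomes to a finitely supported
distribution on `[0,1]`) whose `ℓ₂`-calibration error against every outcome
sequence `b ∈ {0,1}^T` is at most `C · T^{1/3} · log(T+1)`. -/
theorem online_l2_calibration :
    ∃ C : ℝ, 0 < C ∧
      ∀ T : ℕ, 1 ≤ T →
        ∃ A : (t : ℕ) → (Fin t → ℝ) → (ℝ →₀ ℝ),
          (∀ (t : ℕ) (h : Fin t → ℝ),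
            (∀ s, 0 ≤ A t h s) ∧ ((A t h).sum fun _ a => a) = 1 ∧
              ∀ p ∈ (A t h).support, p ∈ Set.Icc (0 : ℝ) 1) ∧
          ∀ b : ℕ → ℝ, (∀ t, b t = 0 ∨ b t = 1) →
            calibrationError T (fun t => A t.1 fun s => b s.1) (fun t => b t.1) ≤
              C * (T : ℝ) ^ ((1 : ℝ) / 3) * Real.log (T + 1) := by
  refine ⟨16, by norm_num, fun T hT => ?_⟩
  set A := (T : ℝ) ^ ((1 : ℝ) / 3)
  have hA : 1 ≤ A := one_le_rpow (by exact_mod_cast hT) (by norm_num)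
  have hTA : (T : ℝ) = A ^ 3 := by
    rw [← rpow_natCast, ← rpow_mul (Nat.cast_nonneg T)]; norm_num
  have hlog : 1 / 2 ≤ log (T + 1) := by
    have : log 2 ≤ log (T + 1) := log_le_log two_pos (by exact_mod_cast Nat.succ_le_succ hT)
    linarith [log_two_gt_d9]
  have hm : 0 < ⌈A⌉₊ := Nat.ceil_pos.2 (by linarith)
  choose sel hsel using OnlineCalibration.exists_isGoodMove hm
  refine ⟨OnlineCalibration.gridForecaster ⌈A⌉₊ sel,
    fun _ _ => (hsel _).isGridDistribution.gridForecast, fun b hb => ?_⟩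
  have hb' (t : ℕ) : b t ∈ Set.Icc 0 1 := by rcases hb t with h | h <;> simp [h]
  exact (OnlineCalibration.calibrationError_gridForecaster_le hm hsel hb' T).trans
    (OnlineCalibration.cube_root_bound hA (Nat.le_ceil A) (Nat.ceil_lt_add_one (by linarith)).le
      hTA.le hlog)
end

section
/- (Full swap regret for Lipschitz losses.) For every d ≥ 1 there is a constant C_d such that for every convex set K ⊆ ℝ^d of diameter at most 1, every L > 0, and every horizon T ≥ 1, there exists a strategy — a family of maps taking the previously observed losses ℓ_1,…,ℓ_{t−1} to a finitely supported probability distribution x_t on K — such that for every sequence of L-Lipschitz loss functions ℓ_1,…,ℓ_T : K → ℝ, FullSwapReg(x_{1:T}, ℓ_{1:T}) ≤ C_d · L · T^{(d+1)/(d+2)} · log(T+1). -/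
/-!
Discretize `K` by a grid net `F` of mesh `ε = T^(-1/(d+2))`, so `|F| ≤ ((2√d + 2) T^(1/(d+2)))^d`,
and rescale the losses on `F` affinely into `[0, 1]`. On `F` run the Blum–Mansour algorithm: Hedge
over all maps `ψ : F → F`, playing in each round a stationary distribution `p` of the Hedge mixture
of these maps. Stationarity makes the cost of `p` equal to the Hedge cost, so the swap regret on `F`
is at most the external regret of Hedge over `|F|^|F|` experts, `η T + |F| log |F| / η`. Replacing
`φ s` by a nearest point of `F` costs at most `L ε` per round, and `η = ε` balances all terms at
`T^((d+1)/(d+2)) log T`.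
-/

open Finset Real Matrix

namespace Matrix

variable {ι : Type*} [Fintype ι] [DecidableEq ι] {M : Matrix ι ι ℝ}

theorem exists_ne_zero_vecMul_eq_self_of_mem_rowStochastic [Nonempty ι]
    (hM : M ∈ rowStochastic ℝ ι) : ∃ v ≠ 0, v ᵥ* M = v := by
  have hdet : (M - 1).det = 0 := exists_mulVec_eq_zero_iff.mp
    ⟨1, one_ne_zero, by rw [sub_mulVec, one_mulVec, one_vecMul_of_mem_rowStochastic hM, sub_self]⟩
  obtain ⟨v, hv, hvM⟩ := exists_vecMul_eq_zero_iff.mpr hdet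
  exact ⟨v, hv, by rwa [vecMul_sub, vecMul_one, sub_eq_zero] at hvM⟩

theorem abs_vecMul_eq_self_of_mem_rowStochastic (hM : M ∈ rowStochastic ℝ ι) {v : ι → ℝ}
    (hv : v ᵥ* M = v) : |v| ᵥ* M = |v| := by
  have hle : ∀ j, |v| j ≤ (|v| ᵥ* M) j := fun j =>
    calc |v| j = |∑ i, v i * M i j| := congrArg abs (congrFun hv j).symm
      _ ≤ ∑ i, |v i * M i j| := abs_sum_le_sum_abs _ _
      _ = (|v| ᵥ* M) j := by
        simp [vecMul, dotProduct, abs_mul, abs_of_nonneg (nonneg_of_mem_rowStochastic hM)]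
  have hsum : ∑ j, |v| j = ∑ j, (|v| ᵥ* M) j := by
    simpa [dotProduct_one] using
      (congrArg (|v| ⬝ᵥ ·) (one_vecMul_of_mem_rowStochastic hM)).symm.trans
        (dotProduct_mulVec _ _ _)
  funext j
  exact ((sum_eq_sum_iff_of_le fun j _ => hle j).mp hsum j (mem_univ j)).symm

theorem exists_mem_stdSimplex_vecMul_eq_self_of_mem_rowStochastic [Nonempty ι]
    (hM : M ∈ rowStochastic ℝ ι) : ∃ p ∈ stdSimplex ℝ ι, p ᵥ* M = p := by
  obtain ⟨v, hv0, hv⟩ := exists_ne_zero_vecMul_eq_self_of_mem_rowStochastic hM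
  obtain ⟨i, hi⟩ := Function.ne_iff.mp hv0
  have hpos : 0 < ∑ j, |v| j :=
    sum_pos' (fun j _ => abs_nonneg (v j)) ⟨i, mem_univ i, abs_pos.mpr hi⟩
  refine ⟨(∑ j, |v| j)⁻¹ • |v|, ⟨fun j => ?_, ?_⟩, ?_⟩
  · exact mul_nonneg (inv_nonneg.mpr hpos.le) (abs_nonneg (v j))
  · simp only [Pi.smul_apply, smul_eq_mul, ← mul_sum, inv_mul_cancel₀ hpos.ne']
  · rw [smul_vecMul, abs_vecMul_eq_self_of_mem_rowStochastic hM hv]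

noncomputable def stationaryDistribution (M : Matrix ι ι ℝ) : ι → ℝ :=
  Classical.epsilon fun p => p ∈ stdSimplex ℝ ι ∧ p ᵥ* M = p

theorem stationaryDistribution_spec [Nonempty ι] (hM : M ∈ rowStochastic ℝ ι) :
    M.stationaryDistribution ∈ stdSimplex ℝ ι ∧
      M.stationaryDistribution ᵥ* M = M.stationaryDistribution :=
  Classical.epsilon_spec (exists_mem_stdSimplex_vecMul_eq_self_of_mem_rowStochastic hM)

end Matrix

section SwapMatrix

variable {ι : Type*} [Fintype ι] [DecidableEq ι]

/-- The transition matrix of the Markov chain that moves from `i` to `φ i`, with `φ` drawn from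
the weights `w`. -/
def swapMatrix (w : (ι → ι) → ℝ) : Matrix ι ι ℝ :=
  of fun i j => ∑ φ, w φ * if φ i = j then 1 else 0

theorem swapMatrix_mulVec (w : (ι → ι) → ℝ) (g : ι → ℝ) :
    swapMatrix w *ᵥ g = fun i => ∑ φ, w φ * g (φ i) := by
  funext i
  simp only [mulVec, dotProduct, swapMatrix, of_apply, sum_mul, mul_assoc]
  rw [sum_comm]
  simp

theorem swapMatrix_mem_rowStochastic {w : (ι → ι) → ℝ} (hw0 : ∀ φ, 0 ≤ w φ)
    (hw1 : ∑ φ, w φ = 1) : swapMatrix w ∈ rowStochastic ℝ ι := by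
  refine mem_rowStochastic.mpr ⟨fun i j => sum_nonneg fun φ _ => ?_, ?_⟩
  · exact mul_nonneg (hw0 φ) (by split_ifs <;> norm_num)
  · rw [swapMatrix_mulVec]
    simp only [Pi.one_apply, mul_one, hw1]
    rfl

theorem sum_mul_sum_comp_eq_of_vecMul_swapMatrix {w : (ι → ι) → ℝ} {p : ι → ℝ}
    (hp : p ᵥ* swapMatrix w = p) (g : ι → ℝ) :
    ∑ φ, w φ * ∑ i, p i * g (φ i) = ∑ i, p i * g i :=
  calc ∑ φ, w φ * ∑ i, p i * g (φ i) = p ⬝ᵥ (swapMatrix w *ᵥ g) := by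
        simp only [swapMatrix_mulVec, dotProduct, mul_sum]
        rw [sum_comm]
        exact sum_congr rfl fun i _ => sum_congr rfl fun φ _ => by ring
    _ = p ⬝ᵥ g := by rw [dotProduct_mulVec, hp]

end SwapMatrix

section Hedge

variable {Φ : Type*} [Fintype Φ]

noncomputable def gibbs (η : ℝ) (S : Φ → ℝ) (φ : Φ) : ℝ :=
  exp (-η * S φ) / ∑ ψ, exp (-η * S ψ)

theorem gibbs_nonneg (η : ℝ) (S : Φ → ℝ) (φ : Φ) : 0 ≤ gibbs η S φ := by
  unfold gibbs
  positivity

theorem sum_gibbs [Nonempty Φ] (η : ℝ) (S : Φ → ℝ) : ∑ φ, gibbs η S φ = 1 := by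
  simp only [gibbs]
  rw [← sum_div, div_self (sum_pos (fun _ _ => exp_pos _) univ_nonempty).ne']

theorem sum_exp_le_mul_exp_gibbs [Nonempty Φ] {η : ℝ} (hη0 : 0 ≤ η) (hη1 : η ≤ 1)
    (S x : Φ → ℝ) (hx : ∀ φ, x φ ∈ Set.Icc 0 1) :
    ∑ φ, exp (-η * (S φ + x φ)) ≤
      (∑ φ, exp (-η * S φ)) * exp (-η * ∑ φ, gibbs η S φ * x φ + η ^ 2) := by
  set Z := ∑ φ, exp (-η * S φ) with hZdef
  have hZ : 0 < Z := sum_pos (fun _ _ => exp_pos _) univ_nonempty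
  have hexp : ∀ φ, exp (-η * x φ) ≤ 1 - η * x φ + η ^ 2 := fun φ => by
    obtain ⟨hx0, hx1⟩ := hx φ
    have hηx : |-η * x φ| ≤ 1 := by
      rw [abs_le]
      constructor <;> nlinarith
    have hsq : (-η * x φ) ^ 2 ≤ η ^ 2 := by
      rw [neg_mul, neg_sq, mul_pow]
      exact mul_le_of_le_one_right (sq_nonneg η) (pow_le_one₀ hx0 hx1)
    linarith [(abs_le.mp (abs_exp_sub_one_sub_id_le hηx)).2]
  have hZgibbs : Z * ∑ φ, gibbs η S φ * x φ = ∑ φ, exp (-η * S φ) * x φ := by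
    rw [mul_sum]
    exact sum_congr rfl fun φ _ => by rw [gibbs, ← hZdef]; field_simp
  calc ∑ φ, exp (-η * (S φ + x φ)) ≤ ∑ φ, exp (-η * S φ) * (1 - η * x φ + η ^ 2) := by
        gcongr with φ
        rw [mul_add, exp_add]
        exact mul_le_mul_of_nonneg_left (hexp φ) (exp_pos _).le
    _ = Z * (-η * ∑ φ, gibbs η S φ * x φ + η ^ 2 + 1) := by
        have hexpand : ∀ φ, exp (-η * S φ) * (1 - η * x φ + η ^ 2) =
            exp (-η * S φ) * (1 + η ^ 2) - η * (exp (-η * S φ) * x φ) := fun φ => by ring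
        rw [sum_congr rfl fun φ _ => hexpand φ, sum_sub_distrib, ← sum_mul, ← mul_sum,
          ← hZgibbs]
        ring
    _ ≤ Z * exp (-η * ∑ φ, gibbs η S φ * x φ + η ^ 2) := by
        gcongr
        exact add_one_le_exp _

theorem hedge_regret_le [Nonempty Φ] {η : ℝ} (hη0 : 0 < η) (hη1 : η ≤ 1) {T : ℕ}
    (c : ℕ → Φ → ℝ) (hc : ∀ t < T, ∀ φ, c t φ ∈ Set.Icc 0 1) (ψ : Φ) :
    ∑ t ∈ range T, ∑ φ, gibbs η (fun φ => ∑ u ∈ range t, c u φ) φ * c t φ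
        - ∑ t ∈ range T, c t ψ ≤ η * T + log (Fintype.card Φ) / η := by
  set W : ℕ → ℝ := fun t => ∑ φ, exp (-η * ∑ u ∈ range t, c u φ) with hWdef
  have hW : ∀ t, 0 < W t := fun t => sum_pos (fun _ _ => exp_pos _) univ_nonempty
  have hstep : ∀ t < T, log (W (t + 1)) - log (W t) ≤
      -η * ∑ φ, gibbs η (fun φ => ∑ u ∈ range t, c u φ) φ * c t φ + η ^ 2 := fun t ht => by
    have h := sum_exp_le_mul_exp_gibbs hη0.le hη1 (fun φ => ∑ u ∈ range t, c u φ) (c t) (hc t ht)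
    simp only [← sum_range_succ] at h
    have := log_le_log (hW _) h
    rwa [log_mul (hW t).ne' (exp_pos _).ne', log_exp, ← sub_le_iff_le_add'] at this
  have htelescope : log (W T) - log (W 0) ≤
      -η * ∑ t ∈ range T, ∑ φ, gibbs η (fun φ => ∑ u ∈ range t, c u φ) φ * c t φ
        + T * η ^ 2 :=
    calc log (W T) - log (W 0) = ∑ t ∈ range T, (log (W (t + 1)) - log (W t)) :=
          (sum_range_sub (fun t => log (W t)) T).symm
      _ ≤ ∑ t ∈ range T,
            (-η * ∑ φ, gibbs η (fun φ => ∑ u ∈ range t, c u φ) φ * c t φ + η ^ 2) :=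
          sum_le_sum fun t ht => hstep t (mem_range.mp ht)
      _ = _ := by simp [sum_add_distrib, mul_sum]
  have hW0 : W 0 = Fintype.card Φ := by simp [hWdef]
  have hWT : -η * ∑ t ∈ range T, c t ψ ≤ log (W T) :=
    (le_log_iff_exp_le (hW T)).mpr <|
      single_le_sum (f := fun φ => exp (-η * ∑ u ∈ range T, c u φ))
        (fun _ _ => (exp_pos _).le) (mem_univ ψ)
  rw [hW0] at htelescope
  rw [← sub_le_iff_le_add', le_div_iff₀ hη0]
  linarith

end Hedge

theorem sum_mul_mem_Icc_of_mem_stdSimplex {ι : Type*} [Fintype ι] {p f : ι → ℝ}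
    (hp : p ∈ stdSimplex ℝ ι) (hf : ∀ i, f i ∈ Set.Icc 0 1) :
    ∑ i, p i * f i ∈ Set.Icc (0 : ℝ) 1 :=
  (convex_Icc 0 1).sum_mem (fun i _ => hp.1 i) hp.2 fun i _ => hf i

section SwapStrategy

variable {ι : Type*} [Fintype ι] [DecidableEq ι]

theorem swapMatrix_gibbs_mem_rowStochastic [Nonempty ι] (η : ℝ) (S : (ι → ι) → ℝ) :
    swapMatrix (gibbs η S) ∈ rowStochastic ℝ ι :=
  swapMatrix_mem_rowStochastic (gibbs_nonneg η S) (sum_gibbs η S)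

/-- The Blum–Mansour strategy: in round `t`, Hedge weighs each map `φ : ι → ι` by the past
costs `∑ i, p u i * g u (φ i)` of the past plays `p u` pushed forward by `φ`, and the play is a
stationary distribution of the resulting mixture of maps. -/
noncomputable def swapStrategy (η : ℝ) : (t : ℕ) → (Fin t → ι → ℝ) → ι → ℝ
  | t, g => stationaryDistribution <| swapMatrix <| gibbs η fun φ =>
      ∑ u : Fin t, ∑ i, swapStrategy η u (fun v => g (Fin.castLE u.2.le v)) i * g u (φ i)
termination_by t => t
decreasing_by exact u.2

theorem swapStrategy_mem_stdSimplex [Nonempty ι] (η : ℝ) (t : ℕ) (g : Fin t → ι → ℝ) :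
    swapStrategy η t g ∈ stdSimplex ℝ ι := by
  rw [swapStrategy]
  exact (stationaryDistribution_spec (swapMatrix_gibbs_mem_rowStochastic η _)).1

theorem swapStrategy_swapRegret_le [Nonempty ι] {η : ℝ} (hη0 : 0 < η) (hη1 : η ≤ 1) {T : ℕ}
    (g : ℕ → ι → ℝ) (hg : ∀ t < T, ∀ i, g t i ∈ Set.Icc 0 1) (ψ : ι → ι) :
    ∑ t ∈ range T, ∑ i, swapStrategy η t (fun u : Fin t => g u) i * (g t i - g t (ψ i)) ≤
      η * T + Fintype.card ι * log (Fintype.card ι) / η := by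
  set p : ℕ → ι → ℝ := fun t => swapStrategy η t fun u : Fin t => g u
  set c : ℕ → (ι → ι) → ℝ := fun u φ => ∑ i, p u i * g u (φ i)
  have hp : ∀ t, p t =
      stationaryDistribution (swapMatrix (gibbs η fun φ => ∑ u ∈ range t, c u φ)) := fun t => by
    simp only [p]
    rw [swapStrategy]
    congr 3
    funext φ
    exact Fin.sum_univ_eq_sum_range (fun u => c u φ) t
  have hplay : ∀ t, ∑ φ, gibbs η (fun φ => ∑ u ∈ range t, c u φ) φ * c t φ =
      ∑ i, p t i * g t i := fun t =>
    sum_mul_sum_comp_eq_of_vecMul_swapMatrix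
      (hp t ▸ (stationaryDistribution_spec (swapMatrix_gibbs_mem_rowStochastic η _)).2) _
  have hc : ∀ t < T, ∀ φ, c t φ ∈ Set.Icc 0 1 := fun t ht φ =>
    sum_mul_mem_Icc_of_mem_stdSimplex (swapStrategy_mem_stdSimplex η t _) fun i => hg t ht (φ i)
  calc ∑ t ∈ range T, ∑ i, p t i * (g t i - g t (ψ i))
      = ∑ t ∈ range T, ∑ φ, gibbs η (fun φ => ∑ u ∈ range t, c u φ) φ * c t φ
          - ∑ t ∈ range T, c t ψ := by
        simp only [hplay, c, mul_sub, sum_sub_distrib]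
    _ ≤ η * T + log (Fintype.card (ι → ι)) / η := hedge_regret_le hη0 hη1 c hc ψ
    _ = η * T + Fintype.card ι * log (Fintype.card ι) / η := by
        rw [Fintype.card_fun, Nat.cast_pow, log_pow]

end SwapStrategy

theorem exists_finset_net_of_mapsTo {X β : Type*} [PseudoMetricSpace X] {K : Set X} {ε : ℝ}
    (G : X → β) {B : Finset β} (hGB : Set.MapsTo G K B)
    (hG : ∀ x ∈ K, ∀ y ∈ K, G x = G y → dist x y ≤ ε) :
    ∃ F : Finset X, ↑F ⊆ K ∧ F.card ≤ B.card ∧ ∀ x ∈ K, ∃ y ∈ F, dist x y ≤ ε := by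
  classical
  obtain hX | hX := isEmpty_or_nonempty X
  · exact ⟨∅, by simp, by simp, fun x => isEmptyElim x⟩
  refine ⟨(B.filter (· ∈ G '' K)).image (Function.invFunOn G K), fun y hy => ?_,
    card_image_le.trans (card_filter_le _ _), fun x hx => ?_⟩
  · obtain ⟨z, hz, rfl⟩ := mem_image.mp (mem_coe.mp hy)
    exact Function.invFunOn_mem (mem_filter.mp hz).2
  · have hex : ∃ a ∈ K, G a = G x := ⟨x, hx, rfl⟩
    exact ⟨_, mem_image_of_mem _ (mem_filter.mpr ⟨hGB hx, x, hx, rfl⟩),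
      hG x hx _ (Function.invFunOn_mem hex) (Function.invFunOn_eq hex).symm⟩

theorem Int.card_Icc_floor_floor_le {a b : ℝ} (hab : a ≤ b) :
    ((Icc ⌊a⌋ ⌊b⌋).card : ℝ) ≤ b - a + 2 := by
  rw [Int.card_Icc, ← Int.cast_natCast, Int.toNat_eq_max, Int.cast_max, max_le_iff]
  push_cast
  constructor
  · linarith [Int.floor_le b, Int.lt_floor_add_one a]
  · linarith

namespace EuclideanSpace

theorem dist_le_sqrt_card_mul {n : Type*} [Fintype n] {x y : EuclideanSpace ℝ n} {δ : ℝ}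
    (hδ : 0 ≤ δ) (h : ∀ i, dist (x i) (y i) ≤ δ) : dist x y ≤ √(Fintype.card n) * δ := by
  rw [EuclideanSpace.dist_eq, ← sqrt_sq hδ, ← sqrt_mul (Nat.cast_nonneg _)]
  gcongr
  calc ∑ i, dist (x i) (y i) ^ 2 ≤ ∑ _i : n, δ ^ 2 :=
        sum_le_sum fun i _ => pow_le_pow_left₀ dist_nonneg (h i) 2
    _ = _ := by simp

theorem exists_finset_net_of_subset_closedBall {d : ℕ} {K : Set (EuclideanSpace ℝ (Fin d))}
    {x₀ : EuclideanSpace ℝ (Fin d)} {r δ : ℝ} (hK : K ⊆ Metric.closedBall x₀ r) (hr : 0 ≤ r)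
    (hδ : 0 < δ) :
    ∃ F : Finset (EuclideanSpace ℝ (Fin d)), ↑F ⊆ K ∧ (F.card : ℝ) ≤ (2 * r / δ + 2) ^ d ∧
      ∀ x ∈ K, ∃ y ∈ F, dist x y ≤ √d * δ := by
  let cell : EuclideanSpace ℝ (Fin d) → Fin d → ℤ := fun x i => ⌊x i / δ⌋
  let box := Fintype.piFinset fun i => Icc ⌊(x₀ i - r) / δ⌋ ⌊(x₀ i + r) / δ⌋
  have hmaps : Set.MapsTo cell K box := fun x hx => by
    refine Fintype.mem_piFinset.mpr fun i => mem_Icc.mpr ?_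
    have hxi : |x i - x₀ i| ≤ r := (PiLp.dist_apply_le x x₀ i).trans (hK hx)
    rw [abs_le] at hxi
    constructor <;> exact Int.floor_mono (div_le_div_of_nonneg_right (by linarith) hδ.le)
  have hcell : ∀ x ∈ K, ∀ y ∈ K, cell x = cell y → dist x y ≤ √d * δ := fun x _ y _ hxy => by
    have hdist := dist_le_sqrt_card_mul (x := x) (y := y) hδ.le fun i => ?_
    · rwa [Fintype.card_fin] at hdist
    have h := Int.abs_sub_lt_one_of_floor_eq_floor (congrFun hxy i)
    rw [← sub_div, abs_div, abs_of_pos hδ, div_lt_one hδ] at h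
    exact h.le
  obtain ⟨F, hFK, hFcard, hF⟩ := exists_finset_net_of_mapsTo cell hmaps hcell
  refine ⟨F, hFK, ?_, hF⟩
  calc (F.card : ℝ) ≤ box.card := by exact_mod_cast hFcard
    _ = ∏ i : Fin d, ((Icc ⌊(x₀ i - r) / δ⌋ ⌊(x₀ i + r) / δ⌋).card : ℝ) := by
        rw [Fintype.card_piFinset, Nat.cast_prod]
    _ ≤ ∏ _i : Fin d, (2 * r / δ + 2) := by
        gcongr with i
        calc _ ≤ (x₀ i + r) / δ - (x₀ i - r) / δ + 2 :=
              Int.card_Icc_floor_floor_le (by gcongr; linarith)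
          _ = 2 * r / δ + 2 := by ring
    _ = _ := by simp

theorem exists_finset_net_card_le {d : ℕ} (hd : 0 < d) {K : Set (EuclideanSpace ℝ (Fin d))}
    (hK : K.Nonempty) (hdiam : ∀ x ∈ K, ∀ y ∈ K, dist x y ≤ 1) {ε : ℝ} (hε0 : 0 < ε)
    (hε1 : ε ≤ 1) :
    ∃ F : Finset (EuclideanSpace ℝ (Fin d)), F.Nonempty ∧ ↑F ⊆ K ∧
      (F.card : ℝ) ≤ ((2 * √d + 2) / ε) ^ d ∧ ∀ x ∈ K, ∃ y ∈ F, dist x y ≤ ε := by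
  obtain ⟨x₀, hx₀⟩ := hK
  have hsd : 0 < √d := sqrt_pos.mpr (Nat.cast_pos.mpr hd)
  obtain ⟨F, hFK, hFcard, hF⟩ := exists_finset_net_of_subset_closedBall
    (fun x hx => Metric.mem_closedBall.mpr (hdiam x hx x₀ hx₀)) zero_le_one (div_pos hε0 hsd)
  rw [mul_div_cancel₀ _ hsd.ne'] at hF
  obtain ⟨y, hy, -⟩ := hF x₀ hx₀
  refine ⟨F, ⟨y, hy⟩, hFK, hFcard.trans ?_, hF⟩
  gcongr
  rw [add_div, mul_one, div_div_eq_mul_div, mul_comm]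
  gcongr
  rwa [le_div_iff₀ hε0, mul_le_iff_le_one_right two_pos]

end EuclideanSpace

noncomputable def Finset.finsuppOfFun {E : Type*} (F : Finset E) (p : F → ℝ) : E →₀ ℝ :=
  (Finsupp.equivFunOnFinite.symm p).embDomain (.subtype _)

namespace Finset

variable {E : Type*} {F : Finset E} {p : F → ℝ}

theorem finsuppOfFun_nonneg (hp : ∀ i, 0 ≤ p i) (s : E) : 0 ≤ F.finsuppOfFun p s := by
  have := Finsupp.embDomain_mono (.subtype (· ∈ F))
    (show 0 ≤ Finsupp.equivFunOnFinite.symm p from hp)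
  rw [Finsupp.embDomain_zero] at this
  exact this s

theorem mem_of_mem_support_finsuppOfFun {s : E} (hs : s ∈ (F.finsuppOfFun p).support) :
    s ∈ F := by
  rw [finsuppOfFun, Finsupp.support_embDomain, mem_map] at hs
  obtain ⟨i, -, rfl⟩ := hs
  exact i.2

theorem sum_finsuppOfFun (h : E → ℝ → ℝ) (h0 : ∀ s, h s 0 = 0) :
    (F.finsuppOfFun p).sum h = ∑ i : F, h i (p i) := by
  rw [finsuppOfFun, Finsupp.sum_embDomain, Finsupp.sum_fintype _ _ fun _ => h0 _]
  simp

end Finset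

section Discretization

variable {E : Type*}

noncomputable def normalizeLoss (L : ℝ) (x₀ : E) (f : E → ℝ) (x : E) : ℝ :=
  (f x - f x₀ + L) / (2 * L)

theorem two_mul_mul_normalizeLoss_sub {L : ℝ} (hL : L ≠ 0) (x₀ : E) (f : E → ℝ) (x y : E) :
    2 * L * (normalizeLoss L x₀ f x - normalizeLoss L x₀ f y) = f x - f y := by
  unfold normalizeLoss
  field_simp
  ring

theorem normalizeLoss_mem_Icc {L : ℝ} (hL : 0 < L) {x₀ : E} {f : E → ℝ} {x : E}
    (h : |f x - f x₀| ≤ L) : normalizeLoss L x₀ f x ∈ Set.Icc 0 1 := by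
  rw [abs_le] at h
  unfold normalizeLoss
  constructor
  · exact div_nonneg (by linarith) (by positivity)
  · rw [div_le_one (by positivity)]
    linarith

variable [DecidableEq E]

noncomputable def netStrategy (F : Finset E) (x₀ : E) (L η : ℝ) (t : ℕ)
    (h : Fin t → E → ℝ) : E →₀ ℝ :=
  F.finsuppOfFun (swapStrategy η t fun u (i : F) => normalizeLoss L x₀ (h u) i)

theorem netStrategy_isDistribution {F : Finset E} (hF : F.Nonempty) (x₀ : E) (L η : ℝ) (t : ℕ)
    (h : Fin t → E → ℝ) :
    (∀ s, 0 ≤ netStrategy F x₀ L η t h s) ∧ ((netStrategy F x₀ L η t h).sum fun _ a => a) = 1 ∧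
      ∀ s ∈ (netStrategy F x₀ L η t h).support, s ∈ F := by
  have : Nonempty F := hF.to_subtype
  have hp := swapStrategy_mem_stdSimplex η t fun u (i : F) => normalizeLoss L x₀ (h u) i
  exact ⟨finsuppOfFun_nonneg hp.1, (sum_finsuppOfFun _ fun _ => rfl).trans hp.2,
    fun _ => mem_of_mem_support_finsuppOfFun⟩

theorem netStrategy_regret_le [PseudoMetricSpace E] {K : Set E} {F : Finset E} {x₀ : E}
    (hx₀ : x₀ ∈ F) (hFK : ↑F ⊆ K) (hdiam : ∀ x ∈ K, ∀ y ∈ K, dist x y ≤ 1) {ε : ℝ}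
    (hnet : ∀ x ∈ K, ∃ y ∈ F, dist x y ≤ ε) {L η : ℝ} (hL : 0 < L) (hη0 : 0 < η) (hη1 : η ≤ 1)
    {T : ℕ} (ℓ : ℕ → E → ℝ) (hℓ : ∀ t < T, ∀ x ∈ K, ∀ y ∈ K, |ℓ t x - ℓ t y| ≤ L * dist x y)
    {φ : E → E} (hφ : Set.MapsTo φ K K) :
    ∑ t ∈ range T,
        (netStrategy F x₀ L η t fun u => ℓ u).sum (fun s a => a * (ℓ t s - ℓ t (φ s))) ≤
      2 * L * (η * T + F.card * log F.card / η) + L * ε * T := by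
  have : Nonempty F := ⟨⟨x₀, hx₀⟩⟩
  have hF : ∀ i : F, (i : E) ∈ K := fun i => hFK i.2
  let g : ℕ → F → ℝ := fun u i => normalizeLoss L x₀ (ℓ u) i
  let p : ℕ → F → ℝ := fun t => swapStrategy η t fun u : Fin t => g u
  have hg : ∀ t < T, ∀ i, g t i ∈ Set.Icc 0 1 := fun t ht i =>
    normalizeLoss_mem_Icc hL <| (hℓ t ht _ (hF i) _ (hFK hx₀)).trans <|
      mul_le_of_le_one_right hL.le (hdiam _ (hF i) _ (hFK hx₀))
  have hp1 : ∀ t, ∑ i, p t i = 1 := fun t => (swapStrategy_mem_stdSimplex η t _).2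
  have hψ : ∀ i : F, ∃ j : F, dist (φ i) j ≤ ε := fun i => by
    obtain ⟨y, hy, h⟩ := hnet _ (hφ (hF i))
    exact ⟨⟨y, hy⟩, h⟩
  choose ψ hψ using hψ
  have hround : ∀ t < T, ∀ i : F,
      ℓ t i - ℓ t (φ i) ≤ 2 * L * (g t i - g t (ψ i)) + L * ε := fun t ht i => by
    rw [two_mul_mul_normalizeLoss_sub hL.ne']
    have := (le_abs_self _).trans (hℓ t ht _ (hF (ψ i)) _ (hφ (hF i)))
    rw [dist_comm] at this
    linarith [mul_le_mul_of_nonneg_left (hψ i) hL.le]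
  have hround_sum : ∀ t, ∑ i, p t i * (2 * L * (g t i - g t (ψ i)) + L * ε) =
      2 * L * ∑ i, p t i * (g t i - g t (ψ i)) + L * ε := fun t => by
    simp only [mul_add, sum_add_distrib, mul_left_comm (p t _), ← mul_sum, ← sum_mul, hp1]
    ring
  calc ∑ t ∈ range T,
        (netStrategy F x₀ L η t fun u => ℓ u).sum (fun s a => a * (ℓ t s - ℓ t (φ s)))
      = ∑ t ∈ range T, ∑ i, p t i * (ℓ t i - ℓ t (φ i)) :=
        sum_congr rfl fun t _ => sum_finsuppOfFun _ fun _ => zero_mul _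
    _ ≤ ∑ t ∈ range T, ∑ i, p t i * (2 * L * (g t i - g t (ψ i)) + L * ε) := by
        gcongr with t ht i
        · exact (swapStrategy_mem_stdSimplex η t _).1 i
        · exact hround t (mem_range.mp ht) i
    _ = 2 * L * ∑ t ∈ range T, ∑ i, p t i * (g t i - g t (ψ i)) + L * ε * T := by
        rw [sum_congr rfl fun t _ => hround_sum t, sum_add_distrib, ← mul_sum, sum_const,
          card_range, nsmul_eq_mul]
        ring
    _ ≤ 2 * L * (η * T + F.card * log F.card / η) + L * ε * T := by
        rw [← Fintype.card_coe F]
        gcongr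
        exact swapStrategy_swapRegret_le hη0 hη1 g hg ψ

end Discretization

theorem three_mul_pow_add_two_mul_mul_log_le {d n : ℕ} {k τ : ℝ} (hk : 0 < k) (hτ : 1 ≤ τ)
    (hn : 1 ≤ n) (hnk : (n : ℝ) ≤ (k * τ) ^ d) :
    3 * τ ^ (d + 1) + 2 * (n * log n) * τ ≤
      (6 + 2 * d * k ^ d * (2 * k + 1)) * τ ^ (d + 1) * log (τ ^ (d + 2) + 1) := by
  set Λ := log (τ ^ (d + 2) + 1)
  have hτd : 1 ≤ τ ^ (d + 2) := one_le_pow₀ hτ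
  have hΛ : 1 / 2 ≤ Λ := by
    have : log 2 ≤ Λ := log_le_log two_pos (by linarith)
    linarith [log_two_gt_d9]
  have hlogτ : log τ ≤ Λ :=
    log_le_log (by linarith) (by linarith [le_self_pow₀ hτ (by omega : d + 2 ≠ 0)])
  have hlogn : log n ≤ d * (k + Λ) :=
    calc log n ≤ log ((k * τ) ^ d) := log_le_log (by exact_mod_cast hn) hnk
      _ = d * (log k + log τ) := by rw [log_pow, log_mul hk.ne' (by positivity)]
      _ ≤ d * (k + Λ) := by gcongr; exact log_le_self hk.le
  have hP : 0 < τ ^ (d + 1) := by positivity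
  calc 3 * τ ^ (d + 1) + 2 * (n * log n) * τ
      ≤ 3 * τ ^ (d + 1) + 2 * ((k * τ) ^ d * (d * (k + Λ))) * τ := by gcongr
    _ = 3 * τ ^ (d + 1) + 2 * d * k ^ d * τ ^ (d + 1) * (k + Λ) := by ring
    _ ≤ 6 * τ ^ (d + 1) * Λ + 2 * d * k ^ d * τ ^ (d + 1) * (2 * k * Λ + Λ) := by
        gcongr ?_ + 2 * d * k ^ d * τ ^ (d + 1) * (?_ + Λ) <;> nlinarith
    _ = _ := by ring

/-- **Full swap regret for Lipschitz losses.**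
For every `d ≥ 1` there is a constant `C` such that for every convex set
`K ⊆ ℝ^d` of diameter at most 1, every `L > 0` and horizon `T ≥ 1`, there is a
strategy (mapping past losses to a finitely supported distribution on `K`)
whose full swap regret against every sequence of `L`-Lipschitz losses is at
most `C · L · T^{(d+1)/(d+2)} · log(T+1)`. -/
theorem full_swap_regret_lipschitz :
    ∀ d : ℕ, 1 ≤ d → ∃ C : ℝ, 0 < C ∧
      ∀ K : Set (EuclideanSpace ℝ (Fin d)), K.Nonempty → Convex ℝ K →
        (∀ x ∈ K, ∀ y ∈ K, ‖x - y‖ ≤ 1) →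
        ∀ L : ℝ, 0 < L →
        ∀ T : ℕ, 1 ≤ T →
          ∃ A : (t : ℕ) → (Fin t → (EuclideanSpace ℝ (Fin d) → ℝ)) →
              (EuclideanSpace ℝ (Fin d) →₀ ℝ),
            (∀ (t : ℕ) (h : Fin t → (EuclideanSpace ℝ (Fin d) → ℝ)),
              (∀ s, 0 ≤ A t h s) ∧ ((A t h).sum fun _ a => a) = 1 ∧
                ∀ s ∈ (A t h).support, s ∈ K) ∧
            ∀ ℓ : ℕ → EuclideanSpace ℝ (Fin d) → ℝ,
              (∀ t < T, ∀ x ∈ K, ∀ y ∈ K, |ℓ t x - ℓ t y| ≤ L * ‖x - y‖) →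
              ∀ φ : EuclideanSpace ℝ (Fin d) → EuclideanSpace ℝ (Fin d),
                (∀ z ∈ K, φ z ∈ K) →
                ∑ t ∈ Finset.range T,
                    (A t fun u : Fin t => ℓ u.1).sum (fun s a => a * (ℓ t s - ℓ t (φ s))) ≤
                  C * L * (T : ℝ) ^ ((d + 1 : ℝ) / (d + 2)) * Real.log (T + 1) := by
  classical
  intro d hd
  set k : ℝ := 2 * √d + 2
  refine ⟨6 + 2 * d * k ^ d * (2 * k + 1), by positivity, ?_⟩
  intro K hK _ hdiam L hL T hT
  simp only [← dist_eq_norm] at hdiam ⊢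
  set τ : ℝ := (T : ℝ) ^ ((1 : ℝ) / (d + 2))
  have hτ1 : 1 ≤ τ := one_le_rpow (by exact_mod_cast hT) (by positivity)
  have hτT : τ ^ (d + 2) = T := by
    rw [← rpow_natCast, ← rpow_mul (Nat.cast_nonneg T), Nat.cast_add, Nat.cast_two,
      one_div_mul_cancel (by positivity), rpow_one]
  have hτR : (T : ℝ) ^ ((d + 1 : ℝ) / (d + 2)) = τ ^ (d + 1) := by
    rw [← rpow_natCast, ← rpow_mul (Nat.cast_nonneg T), Nat.cast_add, Nat.cast_one,
      one_div_mul_eq_div]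
  obtain ⟨F, ⟨x₀, hx₀⟩, hFK, hFcard, hnet⟩ := EuclideanSpace.exists_finset_net_card_le hd hK
    hdiam (inv_pos.mpr (by linarith)) (inv_le_one_of_one_le₀ hτ1)
  rw [div_inv_eq_mul] at hFcard
  refine ⟨netStrategy F x₀ L τ⁻¹, fun t h => ?_, fun ℓ hℓ φ hφ => ?_⟩
  · obtain ⟨h0, h1, hsupp⟩ := netStrategy_isDistribution ⟨x₀, hx₀⟩ x₀ L τ⁻¹ t h
    exact ⟨h0, h1, fun s hs => hFK (hsupp s hs)⟩
  calc _ ≤ 2 * L * (τ⁻¹ * T + F.card * log F.card / τ⁻¹) + L * τ⁻¹ * T :=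
        netStrategy_regret_le hx₀ hFK hdiam hnet hL (inv_pos.mpr (by linarith))
          (inv_le_one_of_one_le₀ hτ1) ℓ hℓ hφ
    _ = L * (3 * τ ^ (d + 1) + 2 * (F.card * log F.card) * τ) := by
        rw [← hτT]
        field_simp
        ring
    _ ≤ L * ((6 + 2 * d * k ^ d * (2 * k + 1)) * τ ^ (d + 1) * log (τ ^ (d + 2) + 1)) := by
        gcongr
        exact three_mul_pow_add_two_mul_mul_log_le (by positivity)
          hτ1 (card_pos.mpr ⟨x₀, hx₀⟩) hFcard
    _ = _ := by rw [hτR, hτT]; ring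
end
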